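/- arXiv:2504.01782 — 2 statements merged into one kernel-verified Lean document; each statement's English description precedes it below -/
import Mathlib

section
/- The unit is tensor free from everything: in an r-partite tensor probability space, let p ≥ 2, x₁,...,x_p ∈ A with x_j = 1 for some j, and let α̲ ∈ (S_p)^r be a tuple such that α_s(j) ≠ j for at least one s ∈ [r]. Then κ_{α̲}(x₁,...,x_p) = 0. -/
open scoped Classical

/-- The length `|σ|` of a permutation: the minimal number of transpositions. -/
noncomputable def permLength {α : Type*} [DecidableEq α] [Fintype α] (σ : Equiv.Perm α) : ℕ :=
  sInf {n | ∃ l : List (Equiv.Perm α), l.length = n ∧ (∀ τ ∈ l, τ.IsSwap) ∧ l.prod = σ}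

/-- The geodesic order: `α ≤ β` iff `|α| + |α⁻¹β| = |β|`. -/
def geoLe {α : Type*} [DecidableEq α] [Fintype α] (σ τ : Equiv.Perm α) : Prop :=
  permLength σ + permLength (σ⁻¹ * τ) = permLength τ

/-- The Möbius function `Möb(σ) = ∏_{c ∈ Cycles(σ)} (−1)^{|c|} Cat_{|c|}`. -/
def moeb {p : ℕ} (σ : Equiv.Perm (Fin p)) : ℂ :=
  ∏ c ∈ σ.cycleFactorsFinset,
    ((-1 : ℂ) ^ (c.support.card - 1) * (catalan (c.support.card - 1) : ℂ))

open Equiv Equiv.Perm Finset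

theorem Equiv.Perm.apply_inv_self {α : Type*} (f : Equiv.Perm α) (x : α) : f (f⁻¹ x) = x :=
  f.apply_symm_apply x

theorem Equiv.Perm.inv_apply_self {α : Type*} (f : Equiv.Perm α) (x : α) : f⁻¹ (f x) = x :=
  f.symm_apply_apply x

set_option linter.unusedVariables false

variable {p : ℕ}

noncomputable def Lc (σ : Equiv.Perm (Fin p)) : ℕ :=
  ∑ c ∈ σ.cycleFactorsFinset, (c.support.card - 1)

lemma walk (τ : Equiv.Perm (Fin p)) (j m x : Fin p) (T : ℕ)
    (h : ∀ i < T, (τ ^ (i+1)) x ≠ j ∧ (τ ^ (i+1)) x ≠ m) :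
    ∀ i ≤ T, ((Equiv.swap j m * τ) ^ i) x = (τ ^ i) x := by
  intro i hi
  induction i with
  | zero => simp
  | succ k ih =>
    have hk : k ≤ T := Nat.le_of_succ_le hi
    rw [pow_succ', pow_succ', Equiv.Perm.mul_apply, ih hk, Equiv.Perm.mul_apply,
      Equiv.Perm.mul_apply]
    have := h k (by omega)
    rw [pow_succ', Equiv.Perm.mul_apply] at this
    exact Equiv.swap_apply_of_ne_of_ne this.1 this.2

lemma pow_apply_inj (τ : Equiv.Perm (Fin p)) (j : Fin p) (hj : τ j ≠ j)
    {a b : ℕ} (ha : a < (τ.cycleOf j).support.card) (hb : b < (τ.cycleOf j).support.card)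
    (hab : (τ ^ a) j = (τ ^ b) j) : a = b := by
  have h := (Equiv.Perm.zpow_eq_zpow_on_iff τ (m := (a : ℤ)) (n := (b : ℤ)) hj)
  simp only [zpow_natCast] at h
  have := h.mp hab
  rw [Int.emod_eq_of_lt (by positivity) (by exact_mod_cast ha),
    Int.emod_eq_of_lt (by positivity) (by exact_mod_cast hb)] at this
  exact_mod_cast this

lemma pow_card_cycleOf_apply (τ : Equiv.Perm (Fin p)) (j : Fin p) :
    (τ ^ (τ.cycleOf j).support.card) j = j := by
  have := Equiv.Perm.pow_mod_card_support_cycleOf_self_apply τ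
    ((τ.cycleOf j).support.card) j
  rwa [Nat.mod_self, pow_zero, Equiv.Perm.one_apply, eq_comm] at this

section CycleSplit

variable {c : Equiv.Perm (Fin p)} {j : Fin p} {t : ℕ}

/-- powers of a cycle at a support point are injective within one period -/
lemma cycle_pow_inj (hc : c.IsCycle) (hj : c j ≠ j) {a b : ℕ}
    (ha : a < c.support.card) (hb : b < c.support.card)
    (hab : (c ^ a) j = (c ^ b) j) : a = b := by
  have hco : c.cycleOf j = c := hc.cycleOf_eq hj
  exact pow_apply_inj c j hj (by rwa [hco]) (by rwa [hco]) hab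

lemma cycle_pow_card (hc : c.IsCycle) (hj : c j ≠ j) : (c ^ c.support.card) j = j := by
  have hco : c.cycleOf j = c := hc.cycleOf_eq hj
  have := pow_card_cycleOf_apply c j
  rwa [hco] at this

variable (hc : c.IsCycle) (hj : c j ≠ j) (ht1 : 1 ≤ t) (htn : t < c.support.card)

set_option linter.unusedSectionVars false

include hc hj ht1 htn

lemma m_ne_j : (c ^ t) j ≠ j := by
  intro h
  have h0 : (c ^ t) j = (c ^ 0) j := by simpa using h
  have := cycle_pow_inj hc hj (a := t) (b := 0) htn
    (lt_of_lt_of_le Nat.zero_lt_two hc.two_le_card_support) h0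
  omega

/-- (A) partial orbit of j -/
lemma eA : ∀ i < t, ((Equiv.swap j ((c^t) j) * c) ^ i) j = (c ^ i) j := by
  intro i hi
  refine walk c j ((c^t) j) j (t-1) ?_ i (by omega)
  intro i' hi'
  constructor
  · intro h
    have h0 : (c ^ (i'+1)) j = (c ^ 0) j := by simpa using h
    have := cycle_pow_inj hc hj (a := i'+1) (b := 0) (by omega)
      (lt_of_lt_of_le Nat.zero_lt_two hc.two_le_card_support) h0
    omega
  · intro h
    have := cycle_pow_inj hc hj (a := i'+1) (b := t) (by omega) htn h
    omega

lemma eA' : ((Equiv.swap j ((c^t) j) * c) ^ t) j = j := by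
  obtain ⟨u, rfl⟩ : ∃ u, t = u + 1 := ⟨t - 1, by omega⟩
  rw [pow_succ', Equiv.Perm.mul_apply, eA hc hj ht1 htn u (by omega),
    Equiv.Perm.mul_apply]
  have : c ((c ^ u) j) = (c ^ (u+1)) j := by
    rw [← Equiv.Perm.mul_apply, ← pow_succ']
  rw [this]
  exact Equiv.swap_apply_right _ _

/-- (B) partial orbit of m -/
lemma eB : ∀ i < c.support.card - t,
    ((Equiv.swap j ((c^t) j) * c) ^ i) ((c^t) j) = (c ^ (t + i)) j := by
  intro i hi
  have key : ((Equiv.swap j ((c^t) j) * c) ^ i) ((c^t) j) = (c ^ i) ((c^t) j) := by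
    refine walk c j ((c^t) j) ((c^t) j) (c.support.card - t - 1) ?_ i (by omega)
    intro i' hi'
    have hpow : (c ^ (i'+1)) ((c^t) j) = (c ^ (t + i' + 1)) j := by
      rw [← Equiv.Perm.mul_apply, ← pow_add, show i' + 1 + t = t + i' + 1 from by omega]
    rw [hpow]
    constructor
    · intro h
      have h0 : (c ^ (t+i'+1)) j = (c ^ 0) j := by simpa using h
      have := cycle_pow_inj hc hj (a := t+i'+1) (b := 0) (by omega)
        (lt_of_lt_of_le Nat.zero_lt_two hc.two_le_card_support) h0
      omega
    · intro h
      have := cycle_pow_inj hc hj (a := t+i'+1) (b := t) (by omega) htn h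
      omega
  rw [key, ← Equiv.Perm.mul_apply, ← pow_add, show i + t = t + i from by omega]

lemma eB' : ((Equiv.swap j ((c^t) j) * c) ^ (c.support.card - t)) ((c^t) j) = (c^t) j := by
  obtain ⟨v, hv⟩ : ∃ v, c.support.card - t = v + 1 := ⟨c.support.card - t - 1, by omega⟩
  rw [hv, pow_succ', Equiv.Perm.mul_apply, eB hc hj ht1 htn v (by omega),
    Equiv.Perm.mul_apply]
  have : c ((c ^ (t + v)) j) = (c ^ c.support.card) j := by
    rw [← Equiv.Perm.mul_apply, ← pow_succ', show t + v + 1 = c.support.card from by omega]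
  rw [this, cycle_pow_card hc hj]
  exact Equiv.swap_apply_left _ _

/-- fixed point analysis at j -/
lemma e_apply_j_of_t_one (h : t = 1) : (Equiv.swap j ((c^t) j) * c) j = j := by
  subst h
  rw [Equiv.Perm.mul_apply, pow_one]
  exact Equiv.swap_apply_right _ _

lemma e_apply_j_of_two_le (h : 2 ≤ t) : (Equiv.swap j ((c^t) j) * c) j = c j := by
  rw [Equiv.Perm.mul_apply]
  refine Equiv.swap_apply_of_ne_of_ne hj ?_
  intro hcontra
  have h1 : (c ^ 1) j = (c ^ t) j := by simpa using hcontra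
  have := cycle_pow_inj hc hj (a := 1) (b := t) (by omega) htn h1
  omega

lemma e_j_ne_j_of_two_le (h : 2 ≤ t) : (Equiv.swap j ((c^t) j) * c) j ≠ j := by
  rw [e_apply_j_of_two_le hc hj ht1 htn h]; exact hj

/-- fixed point analysis at m -/
lemma e_apply_m_of_top (h : t = c.support.card - 1) :
    (Equiv.swap j ((c^t) j) * c) ((c^t) j) = (c^t) j := by
  rw [Equiv.Perm.mul_apply]
  have h2 := hc.two_le_card_support
  have : c ((c^t) j) = (c ^ c.support.card) j := by
    rw [← Equiv.Perm.mul_apply, ← pow_succ', show t + 1 = c.support.card from by omega]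
  rw [this, cycle_pow_card hc hj]
  exact Equiv.swap_apply_left _ _

lemma e_apply_m_of_lt (h : t < c.support.card - 1) :
    (Equiv.swap j ((c^t) j) * c) ((c^t) j) = (c^(t+1)) j := by
  rw [Equiv.Perm.mul_apply]
  have hstep : c ((c^t) j) = (c^(t+1)) j := by
    rw [← Equiv.Perm.mul_apply, ← pow_succ']
  rw [hstep]
  refine Equiv.swap_apply_of_ne_of_ne ?_ ?_
  · intro hcontra
    have h0 : (c ^ (t+1)) j = (c ^ 0) j := by simpa using hcontra
    have := cycle_pow_inj hc hj (a := t+1) (b := 0) (by omega)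
      (lt_of_lt_of_le Nat.zero_lt_two hc.two_le_card_support) h0
    omega
  · intro hcontra
    have := cycle_pow_inj hc hj (a := t+1) (b := t) (by omega) htn hcontra
    omega

lemma e_m_ne_m_of_lt (h : t < c.support.card - 1) :
    (Equiv.swap j ((c^t) j) * c) ((c^t) j) ≠ (c^t) j := by
  rw [e_apply_m_of_lt hc hj ht1 htn h]
  intro hcontra
  have := cycle_pow_inj hc hj (a := t+1) (b := t) (by omega) htn hcontra
  omega


lemma e_support_subset : (Equiv.swap j ((c^t) j) * c).support ⊆ c.support := by
  intro x hx
  have h := Equiv.Perm.support_mul_le (Equiv.swap j ((c^t) j)) c hx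
  rw [Finset.sup_eq_union, Finset.mem_union] at h
  rcases h with h | h
  · rw [Equiv.Perm.support_swap (Ne.symm (m_ne_j hc hj ht1 htn))] at h
    rcases Finset.mem_insert.mp h with rfl | h
    · exact Equiv.Perm.mem_support.2 hj
    · rw [Finset.mem_singleton] at h; subst h
      exact Equiv.Perm.pow_apply_mem_support.2 (Equiv.Perm.mem_support.2 hj)
  · exact h

lemma e_classify : ∀ a ∈ (Equiv.swap j ((c^t) j) * c).support,
    Equiv.Perm.SameCycle (Equiv.swap j ((c^t) j) * c) j a ∨
    Equiv.Perm.SameCycle (Equiv.swap j ((c^t) j) * c) ((c^t) j) a := by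
  intro a ha
  have hac : a ∈ c.support := e_support_subset hc hj ht1 htn ha
  have hsc : Equiv.Perm.SameCycle c j a :=
    hc.sameCycle hj (Equiv.Perm.mem_support.1 hac)
  obtain ⟨i, hi, hia⟩ :=
    hsc.exists_pow_eq_of_mem_support (Equiv.Perm.mem_support.2 hj)
  rw [hc.cycleOf_eq hj] at hi
  by_cases hit : i < t
  · left
    exact ⟨(i:ℤ), by rw [zpow_natCast, eA hc hj ht1 htn i hit]; exact hia⟩
  · right
    refine ⟨((i - t : ℕ) : ℤ), ?_⟩
    rw [zpow_natCast, eB hc hj ht1 htn (i-t) (by omega),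
      show t + (i - t) = i from by omega]
    exact hia

lemma e_card_cycleOf_j (h : 2 ≤ t) :
    ((Equiv.swap j ((c^t) j) * c).cycleOf j).support.card = t := by
  set e := Equiv.swap j ((c^t) j) * c with he
  have hej : e j ≠ j := e_j_ne_j_of_two_le hc hj ht1 htn h
  set N := (e.cycleOf j).support.card with hN
  have hN2 : 2 ≤ N := Equiv.Perm.two_le_card_support_cycleOf_iff.2 hej
  have het : (e ^ t) j = j := eA' hc hj ht1 htn
  have hdvd : N ∣ t := by
    have hiff := (Equiv.Perm.zpow_eq_zpow_on_iff e (m := (t:ℤ)) (n := 0) hej)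
    simp only [zpow_natCast, zpow_zero, Equiv.Perm.one_apply] at hiff
    have := hiff.mp het
    rw [Int.zero_emod, ← Int.dvd_iff_emod_eq_zero] at this
    exact_mod_cast this
  have hle : N ≤ t := Nat.le_of_dvd (by omega) hdvd
  rcases lt_or_eq_of_le hle with hlt | heq
  · exfalso
    have h1 : (e ^ N) j = j := pow_card_cycleOf_apply e j
    rw [eA hc hj ht1 htn N hlt] at h1
    have h0 : (c ^ N) j = (c ^ 0) j := by simpa using h1
    have := cycle_pow_inj hc hj (a := N) (b := 0) (by omega)
      (lt_of_lt_of_le Nat.zero_lt_two hc.two_le_card_support) h0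
    omega
  · exact heq

lemma e_card_cycleOf_m (h : 2 ≤ c.support.card - t) :
    ((Equiv.swap j ((c^t) j) * c).cycleOf ((c^t) j)).support.card = c.support.card - t := by
  set e := Equiv.swap j ((c^t) j) * c with he
  have hem : e ((c^t) j) ≠ (c^t) j := e_m_ne_m_of_lt hc hj ht1 htn (by omega)
  set N := (e.cycleOf ((c^t) j)).support.card with hN
  have hN2 : 2 ≤ N := Equiv.Perm.two_le_card_support_cycleOf_iff.2 hem
  have het : (e ^ (c.support.card - t)) ((c^t) j) = (c^t) j := eB' hc hj ht1 htn
  have hdvd : N ∣ (c.support.card - t) := by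
    have hiff := (Equiv.Perm.zpow_eq_zpow_on_iff e
      (m := ((c.support.card - t : ℕ):ℤ)) (n := 0) hem)
    simp only [zpow_natCast, zpow_zero, Equiv.Perm.one_apply] at hiff
    have := hiff.mp het
    rw [Int.zero_emod, ← Int.dvd_iff_emod_eq_zero] at this
    exact_mod_cast this
  have hle : N ≤ c.support.card - t := Nat.le_of_dvd (by omega) hdvd
  rcases lt_or_eq_of_le hle with hlt | heq
  · exfalso
    have h1 : (e ^ N) ((c^t) j) = (c^t) j := pow_card_cycleOf_apply e ((c^t) j)
    rw [eB hc hj ht1 htn N (by omega)] at h1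
    have := cycle_pow_inj hc hj (a := t + N) (b := t) (by omega) htn h1
    omega
  · exact heq

lemma e_not_sameCycle :
    ¬ Equiv.Perm.SameCycle (Equiv.swap j ((c^t) j) * c) j ((c^t) j) := by
  set e := Equiv.swap j ((c^t) j) * c with he
  intro hsc
  by_cases h : 2 ≤ t
  · have hej : e j ≠ j := e_j_ne_j_of_two_le hc hj ht1 htn h
    obtain ⟨i, hi, hia⟩ :=
      hsc.exists_pow_eq_of_mem_support (Equiv.Perm.mem_support.2 hej)
    rw [e_card_cycleOf_j hc hj ht1 htn h] at hi
    rw [eA hc hj ht1 htn i hi] at hia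
    have := cycle_pow_inj hc hj (a := i) (b := t) (by omega) htn hia
    omega
  · have ht : t = 1 := by omega
    have hej : e j = j := e_apply_j_of_t_one hc hj ht1 htn ht
    obtain ⟨z, hz⟩ := hsc
    rw [Equiv.Perm.zpow_apply_eq_self_of_apply_eq_self hej] at hz
    exact m_ne_j hc hj ht1 htn hz.symm

lemma e_factors_sub : ∀ x ∈ (Equiv.swap j ((c^t) j) * c).cycleFactorsFinset,
    x = (Equiv.swap j ((c^t) j) * c).cycleOf j ∨
    x = (Equiv.swap j ((c^t) j) * c).cycleOf ((c^t) j) := by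
  set e := Equiv.swap j ((c^t) j) * c with he
  intro x hx
  obtain ⟨a, ha⟩ := (Equiv.Perm.mem_cycleFactorsFinset_iff.mp hx).1.nonempty_support
  have hxa : x = e.cycleOf a := Equiv.Perm.cycle_is_cycleOf ha hx
  have hae : a ∈ e.support := Equiv.Perm.mem_cycleFactorsFinset_support_le hx ha
  rcases e_classify hc hj ht1 htn a hae with hsc | hsc
  · left; rw [hxa, hsc.cycleOf_eq]
  · right; rw [hxa, hsc.cycleOf_eq]


lemma e_eq_one (h1 : t = 1) (h2 : c.support.card - t = 1) :
    Equiv.swap j ((c^t) j) * c = 1 := by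
  have hcard : c.support.card = 2 := by
    have := hc.two_le_card_support; omega
  have hjm : j ≠ (c^t) j := (m_ne_j hc hj ht1 htn).symm
  have hsub : ({j, (c^t) j} : Finset (Fin p)) ⊆ c.support := by
    intro x hx
    rcases Finset.mem_insert.mp hx with rfl | hx
    · exact Equiv.Perm.mem_support.2 hj
    · rw [Finset.mem_singleton] at hx; subst hx
      exact Equiv.Perm.pow_apply_mem_support.2 (Equiv.Perm.mem_support.2 hj)
  have hsupp : ({j, (c^t) j} : Finset (Fin p)) = c.support :=
    Finset.eq_of_subset_of_card_le hsub (by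
      rw [hcard, Finset.card_insert_of_notMem (by simp [hjm]), Finset.card_singleton])
  apply Equiv.ext
  intro x
  rw [Equiv.Perm.one_apply, Equiv.Perm.mul_apply]
  by_cases hxj : x = j
  · subst hxj
    have := e_apply_j_of_t_one hc hj ht1 htn h1
    rwa [Equiv.Perm.mul_apply] at this
  by_cases hxm : x = (c^t) j
  · subst hxm
    have := e_apply_m_of_top hc hj ht1 htn (by omega)
    rwa [Equiv.Perm.mul_apply] at this
  · have hxs : x ∉ c.support := by
      rw [← hsupp]; simp [hxj, hxm]
    have hcx : c x = x := Equiv.Perm.notMem_support.mp hxs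
    rw [hcx]
    exact Equiv.swap_apply_of_ne_of_ne hxj hxm

lemma e_factors_of_t_one (h1 : t = 1) (h2 : 2 ≤ c.support.card - t) :
    (Equiv.swap j ((c^t) j) * c).cycleFactorsFinset =
      {(Equiv.swap j ((c^t) j) * c).cycleOf ((c^t) j)} := by
  ext x
  simp only [Finset.mem_singleton]
  constructor
  · intro hx
    rcases e_factors_sub hc hj ht1 htn x hx with h | h
    · exfalso
      have hone : (Equiv.swap j ((c^t) j) * c).cycleOf j = 1 :=
        (Equiv.Perm.cycleOf_eq_one_iff _).2 (e_apply_j_of_t_one hc hj ht1 htn h1)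
      rw [h, hone] at hx
      exact (Equiv.Perm.mem_cycleFactorsFinset_iff.mp hx).1.ne_one rfl
    · exact h
  · rintro rfl
    exact Equiv.Perm.cycleOf_mem_cycleFactorsFinset_iff.2
      (Equiv.Perm.mem_support.2 (e_m_ne_m_of_lt hc hj ht1 htn (by omega)))

lemma e_factors_of_t_top (h1 : 2 ≤ t) (h2 : c.support.card - t = 1) :
    (Equiv.swap j ((c^t) j) * c).cycleFactorsFinset =
      {(Equiv.swap j ((c^t) j) * c).cycleOf j} := by
  ext x
  simp only [Finset.mem_singleton]
  constructor
  · intro hx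
    rcases e_factors_sub hc hj ht1 htn x hx with h | h
    · exact h
    · exfalso
      have hone : (Equiv.swap j ((c^t) j) * c).cycleOf ((c^t) j) = 1 :=
        (Equiv.Perm.cycleOf_eq_one_iff _).2 (e_apply_m_of_top hc hj ht1 htn (by omega))
      rw [h, hone] at hx
      exact (Equiv.Perm.mem_cycleFactorsFinset_iff.mp hx).1.ne_one rfl
  · rintro rfl
    exact Equiv.Perm.cycleOf_mem_cycleFactorsFinset_iff.2
      (Equiv.Perm.mem_support.2 (e_j_ne_j_of_two_le hc hj ht1 htn h1))

lemma e_cycleOf_ne (hjt : 2 ≤ t) (hmt : 2 ≤ c.support.card - t) :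
    (Equiv.swap j ((c^t) j) * c).cycleOf j ≠
      (Equiv.swap j ((c^t) j) * c).cycleOf ((c^t) j) := by
  intro h
  have hem := e_m_ne_m_of_lt hc hj ht1 htn (by omega)
  have hm : (c^t) j ∈ ((Equiv.swap j ((c^t) j) * c).cycleOf ((c^t) j)).support :=
    (Equiv.Perm.mem_support_cycleOf_iff' hem).2 (Equiv.Perm.SameCycle.refl _ _)
  rw [← h] at hm
  have hej := e_j_ne_j_of_two_le hc hj ht1 htn hjt
  exact e_not_sameCycle hc hj ht1 htn ((Equiv.Perm.mem_support_cycleOf_iff' hej).1 hm)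

lemma e_factors_of_mid (hjt : 2 ≤ t) (hmt : 2 ≤ c.support.card - t) :
    (Equiv.swap j ((c^t) j) * c).cycleFactorsFinset =
      {(Equiv.swap j ((c^t) j) * c).cycleOf j,
       (Equiv.swap j ((c^t) j) * c).cycleOf ((c^t) j)} := by
  ext x
  simp only [Finset.mem_insert, Finset.mem_singleton]
  constructor
  · exact e_factors_sub hc hj ht1 htn x
  · rintro (rfl | rfl)
    · exact Equiv.Perm.cycleOf_mem_cycleFactorsFinset_iff.2
        (Equiv.Perm.mem_support.2 (e_j_ne_j_of_two_le hc hj ht1 htn hjt))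
    · exact Equiv.Perm.cycleOf_mem_cycleFactorsFinset_iff.2
        (Equiv.Perm.mem_support.2 (e_m_ne_m_of_lt hc hj ht1 htn (by omega)))

lemma moeb_e : moeb (Equiv.swap j ((c^t) j) * c) =
    ((-1 : ℂ) ^ (t-1) * (catalan (t-1) : ℂ)) *
      ((-1 : ℂ) ^ (c.support.card - t - 1) * (catalan (c.support.card - t - 1) : ℂ)) := by
  have h2c := hc.two_le_card_support
  by_cases h1 : t = 1 <;> by_cases hm1 : c.support.card - t = 1
  · rw [e_eq_one hc hj ht1 htn h1 hm1]
    rw [show t - 1 = 0 from by omega, show c.support.card - t - 1 = 0 from by omega]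
    simp [moeb, catalan_zero]
  · have hm2 : 2 ≤ c.support.card - t := by omega
    rw [moeb, e_factors_of_t_one hc hj ht1 htn h1 hm2, Finset.prod_singleton,
      e_card_cycleOf_m hc hj ht1 htn hm2, show t - 1 = 0 from by omega]
    simp [catalan_zero]
  · have hj2 : 2 ≤ t := by omega
    rw [moeb, e_factors_of_t_top hc hj ht1 htn hj2 hm1, Finset.prod_singleton,
      e_card_cycleOf_j hc hj ht1 htn hj2, show c.support.card - t - 1 = 0 from by omega]
    simp [catalan_zero]
  · have hj2 : 2 ≤ t := by omega
    have hm2 : 2 ≤ c.support.card - t := by omega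
    rw [moeb, e_factors_of_mid hc hj ht1 htn hj2 hm2,
      Finset.prod_insert (by simpa using e_cycleOf_ne hc hj ht1 htn hj2 hm2),
      Finset.prod_singleton, e_card_cycleOf_j hc hj ht1 htn hj2,
      e_card_cycleOf_m hc hj ht1 htn hm2]

lemma Lc_e : Lc (Equiv.swap j ((c^t) j) * c) = c.support.card - 2 := by
  have h2c := hc.two_le_card_support
  by_cases h1 : t = 1 <;> by_cases hm1 : c.support.card - t = 1
  · rw [e_eq_one hc hj ht1 htn h1 hm1]
    simp [Lc]
    omega
  · have hm2 : 2 ≤ c.support.card - t := by omega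
    rw [Lc, e_factors_of_t_one hc hj ht1 htn h1 hm2, Finset.sum_singleton,
      e_card_cycleOf_m hc hj ht1 htn hm2]
    omega
  · have hj2 : 2 ≤ t := by omega
    rw [Lc, e_factors_of_t_top hc hj ht1 htn hj2 hm1, Finset.sum_singleton,
      e_card_cycleOf_j hc hj ht1 htn hj2]
    omega
  · have hj2 : 2 ≤ t := by omega
    have hm2 : 2 ≤ c.support.card - t := by omega
    rw [Lc, e_factors_of_mid hc hj ht1 htn hj2 hm2,
      Finset.sum_insert (by simpa using e_cycleOf_ne hc hj ht1 htn hj2 hm2),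
      Finset.sum_singleton, e_card_cycleOf_j hc hj ht1 htn hj2,
      e_card_cycleOf_m hc hj ht1 htn hm2]
    omega

end CycleSplit

section TauLevel

lemma moeb_mul_disjoint {f g : Equiv.Perm (Fin p)} (h : Equiv.Perm.Disjoint f g) :
    moeb (f * g) = moeb f * moeb g := by
  rw [moeb, h.cycleFactorsFinset_mul_eq_union,
    Finset.prod_union h.disjoint_cycleFactorsFinset]
  rfl

lemma Lc_mul_disjoint {f g : Equiv.Perm (Fin p)} (h : Equiv.Perm.Disjoint f g) :
    Lc (f * g) = Lc f + Lc g := by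
  rw [Lc, h.cycleFactorsFinset_mul_eq_union,
    Finset.sum_union h.disjoint_cycleFactorsFinset]
  rfl

lemma moeb_isCycle {c : Equiv.Perm (Fin p)} (hc : c.IsCycle) :
    moeb c = (-1 : ℂ) ^ (c.support.card - 1) * (catalan (c.support.card - 1) : ℂ) := by
  rw [moeb, hc.cycleFactorsFinset_eq_singleton, Finset.prod_singleton]

lemma Lc_isCycle {c : Equiv.Perm (Fin p)} (hc : c.IsCycle) :
    Lc c = c.support.card - 1 := by
  rw [Lc, hc.cycleFactorsFinset_eq_singleton, Finset.sum_singleton]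

variable {τ : Equiv.Perm (Fin p)} {j m : Fin p}

lemma split_tau (hj : τ j ≠ j) (t : ℕ) (ht1 : 1 ≤ t)
    (htn : t < (τ.cycleOf j).support.card) :
    Lc (Equiv.swap j ((τ^t) j) * τ) + 1 = Lc τ ∧
    moeb (Equiv.swap j ((τ^t) j) * τ) =
      ((-1 : ℂ) ^ (t-1) * (catalan (t-1) : ℂ)) *
        ((-1 : ℂ) ^ ((τ.cycleOf j).support.card - t - 1) *
          (catalan ((τ.cycleOf j).support.card - t - 1) : ℂ)) *
        moeb (τ * (τ.cycleOf j)⁻¹) ∧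
    moeb τ = ((-1 : ℂ) ^ ((τ.cycleOf j).support.card - 1) *
      (catalan ((τ.cycleOf j).support.card - 1) : ℂ)) * moeb (τ * (τ.cycleOf j)⁻¹) := by
  set c := τ.cycleOf j with hcdef
  have hc : c.IsCycle := Equiv.Perm.isCycle_cycleOf τ hj
  have hcj : c j ≠ j := by
    rw [hcdef, Equiv.Perm.cycleOf_apply_self]; exact hj
  have hmem : c ∈ τ.cycleFactorsFinset :=
    Equiv.Perm.cycleOf_mem_cycleFactorsFinset_iff.2 (Equiv.Perm.mem_support.2 hj)
  set d := τ * c⁻¹ with hddef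
  have hd : Equiv.Perm.Disjoint d c :=
    Equiv.Perm.disjoint_mul_inv_of_mem_cycleFactorsFinset hmem
  have htau : τ = d * c := by rw [hddef, inv_mul_cancel_right]
  have hpow : (τ^t) j = (c^t) j := (Equiv.Perm.cycleOf_pow_apply_self τ j t).symm
  have hjc : j ∈ c.support := Equiv.Perm.mem_support.2 hcj
  have hmc : (c^t) j ∈ c.support :=
    Equiv.Perm.pow_apply_mem_support.2 hjc
  have hswd : Equiv.Perm.Disjoint d (Equiv.swap j ((c^t) j)) := by
    rw [Equiv.Perm.disjoint_iff_disjoint_support,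
      Equiv.Perm.support_swap (Ne.symm (m_ne_j hc hcj ht1 htn))]
    have := hd.disjoint_support
    refine Finset.disjoint_left.2 fun x hx hx2 => ?_
    rcases Finset.mem_insert.mp hx2 with rfl | hx2
    · exact Finset.disjoint_left.mp this hx hjc
    · rw [Finset.mem_singleton] at hx2; subst hx2
      exact Finset.disjoint_left.mp this hx hmc
  have hde : Equiv.Perm.Disjoint d (Equiv.swap j ((c^t) j) * c) := by
    intro x
    rcases hswd x with h | h
    · exact Or.inl h
    · rcases hd x with h2 | h2
      · exact Or.inl h2
      · exact Or.inr (by rw [Equiv.Perm.mul_apply, h2, h])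
  have halg : Equiv.swap j ((τ^t) j) * τ = d * (Equiv.swap j ((c^t) j) * c) := by
    rw [hpow]
    conv_lhs => rw [htau]
    rw [← mul_assoc, ← hswd.commute.eq, mul_assoc]
  constructor
  · rw [halg, Lc_mul_disjoint hde, Lc_e hc hcj ht1 htn,
      htau, Lc_mul_disjoint hd, Lc_isCycle hc]
    have := hc.two_le_card_support
    omega
  constructor
  · rw [halg, moeb_mul_disjoint hde, moeb_e hc hcj ht1 htn]
    ring
  · conv_lhs => rw [htau]
    rw [moeb_mul_disjoint hd, moeb_isCycle hc]
    ring

lemma split_Lc (hj : τ j ≠ j) (hm : m ≠ j)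
    (hsc : Equiv.Perm.SameCycle τ j m) : Lc (Equiv.swap j m * τ) + 1 = Lc τ := by
  obtain ⟨i, hi, hia⟩ := hsc.exists_pow_eq_of_mem_support (Equiv.Perm.mem_support.2 hj)
  have hi1 : 1 ≤ i := by
    rcases Nat.eq_zero_or_pos i with rfl | h
    · simp at hia; exact absurd hia.symm hm
    · exact h
  subst hia
  exact (split_tau hj i hi1 hi).1

lemma join_Lc (hm : m ≠ j) (hns : ¬ Equiv.Perm.SameCycle τ j m) :
    Lc (Equiv.swap j m * τ) = Lc τ + 1 := by
  set σ := Equiv.swap j m * τ with hσ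
  have hτjm : τ j ≠ m := fun h => hns ⟨1, by simpa using h⟩
  have hσj : σ j = if τ j = j then m else τ j := by
    rw [hσ, Equiv.Perm.mul_apply]
    split_ifs with h
    · rw [h]; exact Equiv.swap_apply_left _ _
    · exact Equiv.swap_apply_of_ne_of_ne h hτjm
  have hσjne : σ j ≠ j := by
    rw [hσj]; split_ifs with h
    · exact hm
    · exact h
  have hsc : Equiv.Perm.SameCycle σ j m := by
    by_cases h : τ j = j
    · exact ⟨1, by rw [zpow_one, hσj, if_pos h]⟩
    · set a := (τ.cycleOf j).support.card with ha
      have ha2 : 2 ≤ a := Equiv.Perm.two_le_card_support_cycleOf_iff.2 h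
      have hwalk : (σ ^ (a-1)) j = (τ ^ (a-1)) j := by
        refine walk τ j m j (a-1) ?_ (a-1) le_rfl
        intro i hi
        constructor
        · intro hcontra
          have h0 : (τ ^ (i+1)) j = (τ ^ 0) j := by simpa using hcontra
          have := pow_apply_inj τ j h (a := i+1) (b := 0) (by omega) (by omega) h0
          omega
        · intro hcontra
          exact hns ⟨((i+1 : ℕ) : ℤ), by rw [zpow_natCast]; exact hcontra⟩
      have hτa : (τ ^ a) j = j := pow_card_cycleOf_apply τ j
      have hfin : (σ ^ a) j = m := by
        have h1 : (σ ^ a) j = σ ((σ ^ (a-1)) j) := by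
          rw [← Equiv.Perm.mul_apply, ← pow_succ', show a - 1 + 1 = a from by omega]
        rw [h1, hwalk, hσ, Equiv.Perm.mul_apply]
        have h2 : τ ((τ ^ (a-1)) j) = (τ ^ a) j := by
          rw [← Equiv.Perm.mul_apply, ← pow_succ', show a - 1 + 1 = a from by omega]
        rw [h2, hτa]
        exact Equiv.swap_apply_left _ _
      exact ⟨((a : ℕ) : ℤ), by rw [zpow_natCast]; exact hfin⟩
  have hback : Equiv.swap j m * σ = τ := by
    rw [hσ, ← mul_assoc, Equiv.swap_mul_self, one_mul]
  have := split_Lc hσjne hm hsc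
  rw [hback] at this
  omega

end TauLevel

section Length

lemma Lc_eq_zero_iff' {σ : Equiv.Perm (Fin p)} : Lc σ = 0 ↔ σ = 1 := by
  constructor
  · intro h
    rw [← Equiv.Perm.cycleFactorsFinset_eq_empty_iff]
    by_contra hne
    obtain ⟨c, hc⟩ := Finset.nonempty_iff_ne_empty.mpr hne
    have hcy : c.IsCycle := (Equiv.Perm.mem_cycleFactorsFinset_iff.mp hc).1
    have h2 : 2 ≤ c.support.card := hcy.two_le_card_support
    have := Finset.sum_eq_zero_iff.mp h c hc
    omega
  · rintro rfl; simp [Lc]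

lemma Lc_swap_mul {σ : Equiv.Perm (Fin p)} {a b : Fin p} (hab : a ≠ b) :
    Lc (Equiv.swap a b * σ) = Lc σ + 1 ∨ Lc (Equiv.swap a b * σ) + 1 = Lc σ := by
  by_cases hsc : Equiv.Perm.SameCycle σ a b
  · right
    have hσa : σ a ≠ a := by
      intro h
      obtain ⟨z, hz⟩ := hsc
      rw [Equiv.Perm.zpow_apply_eq_self_of_apply_eq_self h] at hz
      exact hab hz
    exact split_Lc hσa (Ne.symm hab) hsc
  · left
    exact join_Lc (Ne.symm hab) hsc

lemma Lc_prod_swaps_le (l : List (Equiv.Perm (Fin p))) (hl : ∀ τ ∈ l, τ.IsSwap) :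
    Lc l.prod ≤ l.length := by
  induction l with
  | nil => simp [Lc]
  | cons s l ih =>
    obtain ⟨a, b, hab, rfl⟩ := hl s List.mem_cons_self
    have ihl := ih (fun τ hτ => hl τ (List.mem_cons_of_mem _ hτ))
    rw [List.prod_cons]
    rcases Lc_swap_mul (σ := l.prod) hab with h | h
    · rw [List.length_cons]; omega
    · rw [List.length_cons]; omega

lemma exists_swap_list : ∀ (n : ℕ) (σ : Equiv.Perm (Fin p)), Lc σ = n →
    ∃ l : List (Equiv.Perm (Fin p)), (∀ τ ∈ l, τ.IsSwap) ∧ l.prod = σ ∧ l.length = Lc σ := by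
  intro n
  induction n using Nat.strong_induction_on with
  | _ n ih =>
    intro σ hσ
    rcases Nat.eq_zero_or_pos n with rfl | hn
    · refine ⟨[], by simp, ?_, by simp [hσ]⟩
      simp [Lc_eq_zero_iff'.mp hσ]
    · have hσ1 : σ ≠ 1 := by
        intro h; rw [h] at hσ; simp [Lc] at hσ; omega
      obtain ⟨j, hj⟩ : ∃ j, σ j ≠ j := by
        by_contra hcon
        push_neg at hcon
        exact hσ1 (Equiv.ext fun x => hcon x)
      have hsc : Equiv.Perm.SameCycle σ j (σ j) := ⟨1, by simp⟩
      have hstep := split_Lc hj hj hsc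
      set σ' := Equiv.swap j (σ j) * σ with hσ'def
      obtain ⟨l, hl1, hl2, hl3⟩ := ih (Lc σ') (by omega) σ' rfl
      refine ⟨Equiv.swap j (σ j) :: l, ?_, ?_, ?_⟩
      · intro τ hτ
        rcases List.mem_cons.mp hτ with rfl | hτ
        · exact ⟨j, σ j, Ne.symm hj, rfl⟩
        · exact hl1 τ hτ
      · rw [List.prod_cons, hl2, hσ'def, ← mul_assoc, Equiv.swap_mul_self, one_mul]
      · rw [List.length_cons, hl3]; omega

lemma permLength_eq_Lc (σ : Equiv.Perm (Fin p)) : permLength σ = Lc σ := by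
  obtain ⟨l, hl1, hl2, hl3⟩ := exists_swap_list (Lc σ) σ rfl
  apply le_antisymm
  · exact Nat.sInf_le ⟨l, hl3, hl1, hl2⟩
  · refine le_csInf ⟨l.length, l, rfl, hl1, hl2⟩ ?_
    rintro n ⟨l', hlen, hsw, hprod⟩
    rw [← hlen, ← hprod]
    exact Lc_prod_swaps_le l' hsw

lemma permLength_triangle (f g : Equiv.Perm (Fin p)) :
    permLength (f * g) ≤ permLength f + permLength g := by
  obtain ⟨l1, h11, h12, h13⟩ := exists_swap_list (Lc f) f rfl
  obtain ⟨l2, h21, h22, h23⟩ := exists_swap_list (Lc g) g rfl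
  rw [permLength_eq_Lc f, permLength_eq_Lc g, ← h13, ← h23, ← List.length_append]
  have : (l1 ++ l2).prod = f * g := by rw [List.prod_append, h12, h22]
  have hle : permLength (f * g) ≤ (l1 ++ l2).length :=
    Nat.sInf_le ⟨l1 ++ l2, rfl, by
      intro τ hτ
      rcases List.mem_append.mp hτ with h | h
      · exact h11 τ h
      · exact h21 τ h, this⟩
  exact hle

end Length

section Key

lemma geoLe_iff_Lc {σ β : Equiv.Perm (Fin p)} :
    geoLe β σ ↔ Lc β + Lc (β⁻¹ * σ) = Lc σ := by
  rw [geoLe, permLength_eq_Lc, permLength_eq_Lc, permLength_eq_Lc]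

lemma Lc_triangle (f g : Equiv.Perm (Fin p)) : Lc (f * g) ≤ Lc f + Lc g := by
  have := permLength_triangle f g
  rwa [permLength_eq_Lc, permLength_eq_Lc, permLength_eq_Lc] at this

lemma erase_form {β γ : Equiv.Perm (Fin p)} {j : Fin p}
    (h : Equiv.swap j (β j) * β = γ) : β = Equiv.swap j (β j) * γ := by
  rw [← h, ← mul_assoc, Equiv.swap_mul_self, one_mul]

lemma beta_inv_sigma {γ σ : Equiv.Perm (Fin p)} {j k : Fin p} (hγj : γ j = j) :
    (Equiv.swap j k * γ)⁻¹ * σ = Equiv.swap j (γ⁻¹ k) * (γ⁻¹ * σ) := by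
  have hγinvj : γ⁻¹ j = j := by
    conv_lhs => rw [← hγj]
    exact Equiv.Perm.inv_apply_self γ j
  rw [mul_inv_rev, Equiv.swap_inv, mul_assoc, ← mul_assoc γ⁻¹,
    Equiv.mul_swap_eq_swap_mul, hγinvj, mul_assoc]

/-- the fixed point class of a permutation fixing j is trivial -/
lemma sameCycle_fixed {γ : Equiv.Perm (Fin p)} {j k : Fin p} (hγj : γ j = j)
    (h : Equiv.Perm.SameCycle γ j k) : k = j := by
  obtain ⟨z, hz⟩ := h
  rw [Equiv.Perm.zpow_apply_eq_self_of_apply_eq_self hγj] at hz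
  exact hz.symm

lemma key_sum (σ γ : Equiv.Perm (Fin p)) (j : Fin p) (hσ : σ j ≠ j) :
    ∑ β ∈ Finset.univ.filter (fun β : Equiv.Perm (Fin p) =>
        geoLe β σ ∧ Equiv.swap j (β j) * β = γ), moeb (β⁻¹ * σ) = 0 := by
  by_cases hγj : γ j = j
  swap
  · rw [Finset.filter_false_of_mem, Finset.sum_empty]
    intro β _ hβ
    apply hγj
    rw [← hβ.2, Equiv.Perm.mul_apply]
    exact Equiv.swap_apply_right j (β j)
  · set τ := γ⁻¹ * σ with hτdef
    have hγinvj : γ⁻¹ j = j := by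
      conv_lhs => rw [← hγj]
      exact Equiv.Perm.inv_apply_self γ j
    have hτj : τ j ≠ j := by
      rw [hτdef, Equiv.Perm.mul_apply]
      intro h
      apply hσ
      have := congrArg γ h
      rwa [Equiv.Perm.apply_inv_self, hγj] at this
    have htri : Lc σ ≤ Lc γ + Lc τ := by
      have h := Lc_triangle γ τ
      rwa [hτdef, ← mul_assoc, mul_inv_cancel, one_mul] at h
    -- a β in the fiber with β j ≠ j has the form swap j (γ m') γ with τ-conditions
    have hform : ∀ β, geoLe β σ → Equiv.swap j (β j) * β = γ → β j ≠ j →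
        Equiv.Perm.SameCycle τ j (γ⁻¹ (β j)) ∧ γ⁻¹ (β j) ≠ j ∧ geoLe γ σ := by
      intro β hgeo herase hβj
      set k := β j with hk
      have hkj : k ≠ j := hβj
      have hβform : β = Equiv.swap j k * γ := erase_form herase
      have hm'j : γ⁻¹ k ≠ j := by
        intro h
        apply hkj
        have := congrArg γ h
        rwa [Equiv.Perm.apply_inv_self, hγj] at this
      have hLβ : Lc β = Lc γ + 1 := by
        rw [hβform]
        refine join_Lc hkj ?_
        intro h
        exact hkj (sameCycle_fixed hγj h)
      have hβinv : β⁻¹ * σ = Equiv.swap j (γ⁻¹ k) * τ := by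
        rw [hβform, beta_inv_sigma hγj]
      have hgeoL := geoLe_iff_Lc.mp hgeo
      rw [hLβ, hβinv] at hgeoL
      by_cases hsc : Equiv.Perm.SameCycle τ j (γ⁻¹ k)
      · refine ⟨hsc, hm'j, ?_⟩
        have hsplit := split_Lc hτj hm'j hsc
        rw [geoLe_iff_Lc, ← hτdef]
        omega
      · exfalso
        have hjoin := join_Lc hm'j hsc
        omega
    by_cases hγσ : geoLe γ σ
    swap
    · rw [Finset.filter_false_of_mem, Finset.sum_empty]
      intro β _ hβ
      rcases eq_or_ne (β j) j with hβj | hβj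
      · apply hγσ
        have : β = γ := by
          have := hβ.2
          rwa [hβj, Equiv.swap_self, Equiv.Perm.one_def.symm, one_mul] at this
        rw [← this]
        exact hβ.1
      · exact hγσ (hform β hβ.1 hβ.2 hβj).2.2
    · -- main case
      set n := (τ.cycleOf j).support.card with hn
      have hn2 : 2 ≤ n := Equiv.Perm.two_le_card_support_cycleOf_iff.2 hτj
      have hγLc := geoLe_iff_Lc.mp hγσ
      rw [← hτdef] at hγLc
      have hτpow_ne : ∀ t, 1 ≤ t → t < n → (τ ^ t) j ≠ j := by
        intro t h1 h2 h
        have h0 : (τ ^ t) j = (τ ^ 0) j := by simpa using h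
        have := pow_apply_inj τ j hτj (a := t) (b := 0) h2 (by omega) h0
        omega
      have hfilter : Finset.univ.filter (fun β : Equiv.Perm (Fin p) =>
          geoLe β σ ∧ Equiv.swap j (β j) * β = γ) =
          insert γ ((Finset.Ico 1 n).image
            (fun t => Equiv.swap j (γ ((τ^t) j)) * γ)) := by
        ext β
        simp only [Finset.mem_filter, Finset.mem_univ, true_and, Finset.mem_insert,
          Finset.mem_image, Finset.mem_Ico]
        constructor
        · rintro ⟨hgeo, herase⟩
          rcases eq_or_ne (β j) j with hβj | hβj
          · left
            rw [← herase, hβj, Equiv.swap_self, Equiv.Perm.one_def.symm, one_mul]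
          · right
            obtain ⟨hsc, hm'j, -⟩ := hform β hgeo herase hβj
            obtain ⟨t, ht, hteq⟩ :=
              hsc.exists_pow_eq_of_mem_support (Equiv.Perm.mem_support.2 hτj)
            have ht1 : 1 ≤ t := by
              rcases Nat.eq_zero_or_pos t with rfl | h
              · exfalso; apply hm'j; simpa using hteq.symm
              · exact h
            refine ⟨t, ⟨ht1, by rwa [← hn] at ht⟩, ?_⟩
            rw [hteq, Equiv.Perm.apply_inv_self]
            exact (erase_form herase).symm
        · intro h
          rcases h with rfl | ⟨t, ⟨ht1, htn⟩, rfl⟩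
          · constructor
            · exact hγσ
            · rw [hγj, Equiv.swap_self, Equiv.Perm.one_def.symm, one_mul]
          · set k := γ ((τ^t) j) with hkdef
            have hβj : (Equiv.swap j k * γ) j = k := by
              rw [Equiv.Perm.mul_apply, hγj]
              exact Equiv.swap_apply_left _ _
            have hkj : k ≠ j := by
              rw [hkdef]
              intro h
              exact hτpow_ne t ht1 htn (γ.injective (h.trans hγj.symm))
            constructor
            · rw [geoLe_iff_Lc]
              have hLβ : Lc (Equiv.swap j k * γ) = Lc γ + 1 := by
                refine join_Lc hkj ?_
                intro h
                exact hkj (sameCycle_fixed hγj h)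
              have hβinv : (Equiv.swap j k * γ)⁻¹ * σ = Equiv.swap j ((τ^t) j) * τ := by
                rw [beta_inv_sigma hγj, ← hτdef, hkdef, Equiv.Perm.inv_apply_self]
              have hsplit := (split_tau hτj t ht1 (by rwa [← hn])).1
              rw [hLβ, hβinv]
              omega
            · rw [hβj, ← mul_assoc, Equiv.swap_mul_self, one_mul]
      rw [hfilter]
      have hγnotmem : γ ∉ (Finset.Ico 1 n).image
          (fun t => Equiv.swap j (γ ((τ^t) j)) * γ) := by
        rw [Finset.mem_image]
        rintro ⟨t, ht, heq⟩
        rw [Finset.mem_Ico] at ht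
        have h1 : (Equiv.swap j (γ ((τ^t) j)) * γ) j = γ ((τ^t) j) := by
          rw [Equiv.Perm.mul_apply, hγj]
          exact Equiv.swap_apply_left _ _
        rw [heq] at h1
        rw [hγj] at h1
        exact hτpow_ne t ht.1 ht.2 (γ.injective (h1.symm.trans hγj.symm))
      rw [Finset.sum_insert hγnotmem]
      rw [Finset.sum_image (by
        intro a ha b hb hab
        rw [Finset.mem_coe, Finset.mem_Ico] at ha hb
        have := congrArg (fun g : Equiv.Perm (Fin p) => g j) hab
        simp only [Equiv.Perm.mul_apply, hγj] at this
        rw [Equiv.swap_apply_left, Equiv.swap_apply_left] at this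
        have h2 : (τ ^ a) j = (τ ^ b) j := γ.injective this
        exact pow_apply_inj τ j hτj (a := a) (b := b) ha.2 hb.2 h2)]
      have hterm : ∀ t ∈ Finset.Ico 1 n,
          moeb ((Equiv.swap j (γ ((τ^t) j)) * γ)⁻¹ * σ) =
          ((-1 : ℂ) ^ (t-1) * (catalan (t-1) : ℂ)) *
            ((-1 : ℂ) ^ (n - t - 1) * (catalan (n - t - 1) : ℂ)) *
            moeb (τ * (τ.cycleOf j)⁻¹) := by
        intro t ht
        rw [Finset.mem_Ico] at ht
        have hβinv : (Equiv.swap j (γ ((τ^t) j)) * γ)⁻¹ * σ =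
            Equiv.swap j ((τ^t) j) * τ := by
          rw [beta_inv_sigma hγj, ← hτdef, Equiv.Perm.inv_apply_self]
        rw [hβinv]
        exact (split_tau hτj t ht.1 (by rw [← hn]; exact ht.2)).2.1
      rw [Finset.sum_congr rfl hterm, ← hτdef]
      rw [(split_tau hτj 1 le_rfl (by omega)).2.2]
      set D := moeb (τ * (τ.cycleOf j)⁻¹) with hD
      rw [← Finset.sum_mul, ← add_mul]
      convert zero_mul D using 2
      rw [Finset.sum_Ico_eq_sum_range]
      have hsummand : ∀ i ∈ Finset.range (n - 1),
          ((-1 : ℂ) ^ (1 + i - 1) * (catalan (1 + i - 1) : ℂ)) *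
            ((-1 : ℂ) ^ (n - (1 + i) - 1) * (catalan (n - (1 + i) - 1) : ℂ)) =
          (-1 : ℂ) ^ (n - 2) * ((catalan i : ℂ) * (catalan (n - 2 - i) : ℂ)) := by
        intro i hi
        rw [Finset.mem_range] at hi
        rw [show 1 + i - 1 = i from by omega, show n - (1 + i) - 1 = n - 2 - i from by omega]
        have hexp : (-1 : ℂ) ^ i * (-1 : ℂ) ^ (n - 2 - i) = (-1 : ℂ) ^ (n - 2) := by
          rw [← pow_add, show i + (n - 2 - i) = n - 2 from by omega]
        calc ((-1 : ℂ) ^ i * (catalan i : ℂ)) *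
              ((-1 : ℂ) ^ (n - 2 - i) * (catalan (n - 2 - i) : ℂ))
            = ((-1 : ℂ) ^ i * (-1 : ℂ) ^ (n - 2 - i)) *
              ((catalan i : ℂ) * (catalan (n - 2 - i) : ℂ)) := by ring
          _ = (-1 : ℂ) ^ (n - 2) * ((catalan i : ℂ) * (catalan (n - 2 - i) : ℂ)) := by
              rw [hexp]
      rw [Finset.sum_congr rfl hsummand, ← Finset.mul_sum]
      have hcat : ∑ i ∈ Finset.range (n - 1), (catalan i : ℂ) * (catalan (n - 2 - i) : ℂ) =
          (catalan (n - 1) : ℂ) := by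
        have h := catalan_succ (n - 2)
        rw [show n - 2 + 1 = n - 1 from by omega] at h
        rw [← Fin.sum_univ_eq_sum_range (fun i => (catalan i : ℂ) * (catalan (n - 2 - i) : ℂ))
          (n - 1)]
        rw [h]
        push_cast
        rw [show (n - 2).succ = n - 1 from by omega]
      rw [hcat]
      have hsign : (-1 : ℂ) ^ (n - 1) = -((-1 : ℂ) ^ (n - 2)) := by
        rw [show n - 1 = (n - 2) + 1 from by omega, pow_succ]
        ring
      rw [hsign]
      ring

end Key

/-- The unit is tensor free from everything: in an `r`-partite tensor probability space
(whose moment functionals `φ_{α̲}` satisfy the unitality axiom, here stated in the fixed-arity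
form: a unit entry at position `j` can be erased from every component permutation, erasure of
`j` from `α` being given by `(j, α j) · α`), any tensor free cumulant
`κ_{α̲}(x₁,…,x_p) = Σ_{β̲ ≤ α̲} φ_{β̲}(x) ∏_s Möb(β_s⁻¹α_s)` with `x_j = 1` and `α_s j ≠ j`
for at least one `s` vanishes. -/
theorem unit_is_tensorFree {r : ℕ} {A : Type*} [Ring A] [Algebra ℂ A]
    (φ : ∀ p : ℕ, (Fin r → Equiv.Perm (Fin p)) → (Fin p → A) → ℂ)
    (hunital : ∀ (p : ℕ) (α : Fin r → Equiv.Perm (Fin p)) (x : Fin p → A) (j : Fin p),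
      x j = 1 → φ p α x = φ p (fun s => Equiv.swap j (α s j) * α s) x)
    (p : ℕ) (hp : 2 ≤ p) (α : Fin r → Equiv.Perm (Fin p)) (x : Fin p → A)
    (j : Fin p) (hx : x j = 1) (hα : ∃ s, α s j ≠ j) :
    (∑ b ∈ Finset.univ.filter
        (fun b : Fin r → Equiv.Perm (Fin p) => ∀ s, geoLe (b s) (α s)),
      φ p b x * ∏ s, moeb ((b s)⁻¹ * α s)) = 0 := by
  obtain ⟨s₀, hs₀⟩ := hα
  rw [← Finset.sum_fiberwise_of_maps_to
    (g := fun b : Fin r → Equiv.Perm (Fin p) => fun s => Equiv.swap j (b s j) * b s)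
    (t := (Finset.univ : Finset (Fin r → Equiv.Perm (Fin p))))
    (fun b _ => Finset.mem_univ _)]
  refine Finset.sum_eq_zero fun γ _ => ?_
  have hstep : ∀ b ∈ (Finset.univ.filter
      (fun b : Fin r → Equiv.Perm (Fin p) => ∀ s, geoLe (b s) (α s))).filter
        (fun b => (fun s => Equiv.swap j (b s j) * b s) = γ),
      φ p b x * ∏ s, moeb ((b s)⁻¹ * α s) = φ p γ x * ∏ s, moeb ((b s)⁻¹ * α s) := by
    intro b hb
    have h2 := (Finset.mem_filter.mp hb).2
    rw [hunital p b x j hx, h2]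
  rw [Finset.sum_congr rfl hstep, ← Finset.mul_sum]
  have hpi : (Finset.univ.filter
      (fun b : Fin r → Equiv.Perm (Fin p) => ∀ s, geoLe (b s) (α s))).filter
        (fun b => (fun s => Equiv.swap j (b s j) * b s) = γ) =
      Fintype.piFinset (fun s => Finset.univ.filter
        (fun β : Equiv.Perm (Fin p) => geoLe β (α s) ∧ Equiv.swap j (β j) * β = γ s)) := by
    ext b
    simp only [Finset.mem_filter, Finset.mem_univ, true_and, Fintype.mem_piFinset,
      funext_iff]
    constructor
    · rintro ⟨h1, h2⟩ s
      exact ⟨h1 s, h2 s⟩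
    · intro h
      exact ⟨fun s => (h s).1, fun s => (h s).2⟩
  rw [hpi, ← Finset.prod_univ_sum
    (t := fun s => Finset.univ.filter
      (fun β : Equiv.Perm (Fin p) => geoLe β (α s) ∧ Equiv.swap j (β j) * β = γ s))
    (f := fun s β => moeb (β⁻¹ * α s))]
  have hzero : ∑ β ∈ Finset.univ.filter
      (fun β : Equiv.Perm (Fin p) => geoLe β (α s₀) ∧ Equiv.swap j (β j) * β = γ s₀),
      moeb (β⁻¹ * α s₀) = 0 := key_sum (α s₀) (γ s₀) j hs₀
  rw [Finset.prod_eq_zero (Finset.mem_univ s₀) hzero, mul_zero]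
end

section
/- Cumulant scaling in the tensor free central limit theorem: let {x_i} be identically tensor distributed, tensor freely independent elements of an r-partite tensor probability space, and set x̄_N = (x₁ + ⋯ + x_N − Nφ(x₁))/√N. Then for every irreducible tuple α̲ ∈ (S_p)^r, κ_{α̲}(x̄_N) = N^{1−p/2} κ_{α̲}(x₁ − φ(x₁)·1). Consequently, as N → ∞, κ_{α̲}(x̄_N) converges to κ_{α̲}(x₁) if p = 2 and to 0 if p ≠ 2. -/
open scoped Classical

/-- A tuple `α̲ ∈ (S_p)^r` is irreducible when the join of the orbit partitions of its
components is the one-block partition of `[p]`. -/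
def IrreducibleTuple {p r : ℕ} (a : Fin r → Equiv.Perm (Fin p)) : Prop :=
  ∀ i j : Fin p, Relation.EqvGen (fun i j => ∃ s, (a s).SameCycle i j) i j

/-- The tensor free cumulants associated to a family of tensor moment functionals. -/
noncomputable def tensorCum {r : ℕ} {A : Type*} [Ring A] [Algebra ℂ A]
    (φ : ∀ p : ℕ, (Fin r → Equiv.Perm (Fin p)) → MultilinearMap ℂ (fun _ : Fin p => A) ℂ)
    (p : ℕ) (α : Fin r → Equiv.Perm (Fin p)) (x : Fin p → A) : ℂ :=
  ∑ b ∈ Finset.univ.filter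
      (fun b : Fin r → Equiv.Perm (Fin p) => ∀ s, geoLe (b s) (α s)),
    φ p b x * ∏ s, moeb ((b s)⁻¹ * α s)

/-- The normalized centered sum `x̄_N = (x₁ + ⋯ + x_N − N φ(x₁)·1)/√N`, where
`φ(x₁) = φ₁(x₁)` is the mean. -/
noncomputable def centeredAvg {r : ℕ} {A : Type*} [Ring A] [Algebra ℂ A]
    (φ : ∀ p : ℕ, (Fin r → Equiv.Perm (Fin p)) → MultilinearMap ℂ (fun _ : Fin p => A) ℂ)
    (x : ℕ → A) (N : ℕ) : A :=
  ((Real.sqrt N : ℂ))⁻¹ •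
    (∑ i ∈ Finset.range N, x i -
      (N : ℂ) • ((φ 1 (fun _ => 1) (fun _ => x 0)) • (1 : A)))

namespace TFClt

open Equiv Equiv.Perm Finset

noncomputable section

variable {β : Type*} [DecidableEq β] [Fintype β]

/-- weight of a cycle of size `s` -/
def Fcat (s : ℕ) : ℂ := (-1 : ℂ) ^ (s - 1) * (catalan (s - 1) : ℂ)

lemma catalan_pos (n : ℕ) : 0 < catalan n := by
  induction n with
  | zero => simp [catalan_zero]
  | succ n ih =>
    have h := catalan_succ' n
    rw [h]
    refine Finset.sum_pos' (fun i _ => Nat.zero_le _) ⟨(0, n), ?_, ?_⟩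
    · simp [Finset.mem_antidiagonal]
    · simpa [catalan_zero] using ih

lemma Fcat_ne_zero (s : ℕ) : Fcat s ≠ 0 := by
  have h1 : ((-1 : ℂ) ^ (s-1)) ≠ 0 := pow_ne_zero _ (by norm_num)
  have h2 : ((catalan (s-1) : ℂ)) ≠ 0 :=
    Nat.cast_ne_zero.mpr (Nat.ne_of_gt (catalan_pos (s-1)))
  exact mul_ne_zero h1 h2

/-- generalized moebius -/
def gmoeb (σ : Perm β) : ℂ := ∏ c ∈ σ.cycleFactorsFinset, Fcat c.support.card

/-- absolute length via cycle factors -/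
def ell (σ : Perm β) : ℕ := ∑ c ∈ σ.cycleFactorsFinset, (c.support.card - 1)

@[simp] lemma gmoeb_one : gmoeb (1 : Perm β) = 1 := by simp [gmoeb, cycleFactorsFinset_one]

@[simp] lemma ell_one : ell (1 : Perm β) = 0 := by simp [ell, cycleFactorsFinset_one]

lemma gmoeb_mul_of_disjoint {f g : Perm β} (h : f.Disjoint g) :
    gmoeb (f * g) = gmoeb f * gmoeb g := by
  rw [gmoeb, h.cycleFactorsFinset_mul_eq_union,
    Finset.prod_union h.disjoint_cycleFactorsFinset]; rfl

lemma ell_mul_of_disjoint {f g : Perm β} (h : f.Disjoint g) :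
    ell (f * g) = ell f + ell g := by
  rw [ell, h.cycleFactorsFinset_mul_eq_union,
    Finset.sum_union h.disjoint_cycleFactorsFinset]; rfl

lemma gmoeb_isCycle {c : Perm β} (hc : c.IsCycle) : gmoeb c = Fcat c.support.card := by
  rw [gmoeb, hc.cycleFactorsFinset_eq_singleton, Finset.prod_singleton]

lemma ell_isCycle {c : Perm β} (hc : c.IsCycle) : ell c = c.support.card - 1 := by
  rw [ell, hc.cycleFactorsFinset_eq_singleton, Finset.sum_singleton]

lemma gmoeb_formPerm {l : List β} (hn : l.Nodup) (hne : l ≠ []) :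
    gmoeb l.formPerm = Fcat l.length := by
  match l, hne with
  | [x], _ => simp [List.formPerm_singleton, Fcat]
  | (x :: y :: l), _ =>
    have h2 : 2 ≤ (x :: y :: l).length := by simp
    have hc := List.isCycle_formPerm hn h2
    rw [gmoeb_isCycle hc, List.support_formPerm_of_nodup _ hn
      (by intro z hz; simp at hz), List.toFinset_card_of_nodup hn]

lemma ell_formPerm {l : List β} (hn : l.Nodup) (hne : l ≠ []) :
    ell l.formPerm = l.length - 1 := by
  match l, hne with
  | [x], _ => simp [List.formPerm_singleton]
  | (x :: y :: l), _ =>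
    have h2 : 2 ≤ (x :: y :: l).length := by simp
    have hc := List.isCycle_formPerm hn h2
    rw [ell_isCycle hc, List.support_formPerm_of_nodup _ hn
      (by intro z hz; simp at hz), List.toFinset_card_of_nodup hn]

section Key

variable {g : Perm β} {a : β}

/-- powers of a cycle applied to a support point are injective below the support card -/
lemma cycle_pow_inj (hg : g.IsCycle) (ha : g a ≠ a) {i j : ℕ}
    (hi : i < g.support.card) (hj : j < g.support.card) (hij : (g ^ i) a = (g ^ j) a) :
    i = j := by
  have horder : orderOf g = g.support.card := hg.orderOf
  wlog h : i ≤ j generalizing i j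
  · exact (this hj hi hij.symm (by omega)).symm
  by_contra hne
  have hd : (g ^ (j - i)) a = a := by
    have : (g ^ (i + (j - i))) a = (g ^ i) a := by
      rw [Nat.add_sub_cancel' h]; exact hij.symm
    rw [pow_add, Equiv.Perm.mul_apply] at this
    exact (g ^ i).injective this
  have h1 : g ^ (j - i) = 1 := hg.pow_eq_one_iff.mpr ⟨a, ha, hd⟩
  have := orderOf_dvd_of_pow_eq_one h1
  rw [horder] at this
  have := Nat.le_of_dvd (by omega) this
  omega

end Key


section KeyFact

variable {g : Perm β} {a : β}

lemma key_factorization (hg : g.IsCycle) (ha : g a ≠ a) {t : ℕ} (ht1 : 1 ≤ t)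
    (htm : t < g.support.card) :
    swap a ((g ^ t) a) * g =
      ((List.range t).map (fun i => (g ^ i) a)).formPerm *
      ((List.range (g.support.card - t)).map (fun i => (g ^ (t + i)) a)).formPerm := by
  set m := g.support.card with hm
  have hmem : ∀ i : ℕ, (g ^ i) a ∈ g.support := fun i =>
    pow_apply_mem_support.mpr (mem_support.mpr ha)
  set l1 : List β := (List.range t).map (fun i => (g ^ i) a) with hl1
  set l2 : List β := (List.range (m - t)).map (fun i => (g ^ (t + i)) a) with hl2
  have hlen1 : l1.length = t := by simp [hl1]
  have hlen2 : l2.length = m - t := by simp [hl2]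
  have hmem1 : ∀ x ∈ l1, ∃ i, i < t ∧ (g ^ i) a = x := by
    intro x hx; rw [hl1, List.mem_map] at hx
    obtain ⟨i, hi, rfl⟩ := hx; exact ⟨i, List.mem_range.mp hi, rfl⟩
  have hmem2 : ∀ x ∈ l2, ∃ i, i < m - t ∧ (g ^ (t + i)) a = x := by
    intro x hx; rw [hl2, List.mem_map] at hx
    obtain ⟨i, hi, rfl⟩ := hx; exact ⟨i, List.mem_range.mp hi, rfl⟩
  have hn1 : l1.Nodup := by
    refine List.Nodup.map_on ?_ (List.nodup_range (n := t))
    intro i hi j hj hij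
    exact cycle_pow_inj hg ha (lt_trans (List.mem_range.mp hi) htm)
      (lt_trans (List.mem_range.mp hj) htm) hij
  have hn2 : l2.Nodup := by
    refine List.Nodup.map_on ?_ (List.nodup_range (n := m - t))
    intro i hi j hj hij
    have := cycle_pow_inj hg ha (i := t + i) (j := t + j)
      (by have := List.mem_range.mp hi; omega) (by have := List.mem_range.mp hj; omega) hij
    omega
  have hdisj : l1.Disjoint l2 := by
    intro x hx1 hx2
    obtain ⟨i, hi, rfl⟩ := hmem1 x hx1
    obtain ⟨i', hi', he⟩ := hmem2 _ hx2
    have := cycle_pow_inj hg ha (i := t + i') (j := i) (by omega) (by omega) he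
    omega
  have hx1 : ∀ i, i < t → l1.formPerm ((g ^ i) a) = (g ^ ((i + 1) % t)) a := by
    intro i hi
    have hgete : l1[i]'(by omega) = (g ^ i) a := by simp [hl1]
    have := List.formPerm_apply_getElem l1 hn1 i (by omega)
    rw [hgete] at this
    rw [this]
    simp [hl1, hlen1]
  have hx2 : ∀ i, i < m - t → l2.formPerm ((g ^ (t + i)) a) = (g ^ (t + (i + 1) % (m - t))) a := by
    intro i hi
    have hgete : l2[i]'(by omega) = (g ^ (t + i)) a := by simp [hl2]
    have := List.formPerm_apply_getElem l2 hn2 i (by omega)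
    rw [hgete] at this
    rw [this]
    simp [hl2, hlen2]
  ext x
  rw [Equiv.Perm.mul_apply, Equiv.Perm.mul_apply]
  by_cases hx : x ∈ g.support
  · obtain ⟨i, him, rfl⟩ : ∃ i, i < m ∧ (g ^ i) a = x := by
      have hsc : g.SameCycle a x := hg.sameCycle ha (mem_support.mp hx)
      obtain ⟨i, hio, hie⟩ := hsc.exists_pow_eq'
      exact ⟨i, by rwa [hg.orderOf] at hio, hie⟩
    have hgx : g ((g ^ i) a) = (g ^ (i + 1)) a := by
      rw [pow_succ', Equiv.Perm.mul_apply]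
    by_cases hit : i < t
    · have hnotin2 : (g ^ i) a ∉ l2 := fun h => hdisj (by
        rw [hl1, List.mem_map]; exact ⟨i, List.mem_range.mpr hit, rfl⟩) h
      rw [List.formPerm_apply_of_notMem hnotin2, hx1 i hit, hgx]
      by_cases hit1 : i + 1 < t
      · rw [Nat.mod_eq_of_lt hit1]
        refine swap_apply_of_ne_of_ne ?_ ?_
        · intro h
          have := cycle_pow_inj hg ha (i := i+1) (j := 0) (by omega) (by omega) (by simpa using h)
          omega
        · intro h
          have := cycle_pow_inj hg ha (i := i+1) (j := t) (by omega) htm h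
          omega
      · have hieq : i + 1 = t := by omega
        rw [hieq, Nat.mod_self, pow_zero, swap_apply_right]
        rfl
    · push_neg at hit
      have hin2 : (g ^ i) a = (g ^ (t + (i - t))) a := by rw [Nat.add_sub_cancel' hit]
      rw [hgx, hin2, hx2 (i - t) (by omega)]
      have hz : (g ^ (t + (i - t + 1) % (m - t))) a ∉ l1 := by
        intro h
        obtain ⟨i', hi', he⟩ := hmem1 _ h
        have hmod : (i - t + 1) % (m - t) < m - t := Nat.mod_lt _ (by omega)
        have := cycle_pow_inj hg ha (i := i') (j := t + (i - t + 1) % (m - t))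
          (by omega) (by omega) he
        omega
      rw [List.formPerm_apply_of_notMem hz]
      by_cases him1 : i + 1 < m
      · have hmod : (i - t + 1) % (m - t) = i - t + 1 := Nat.mod_eq_of_lt (by omega)
        rw [hmod]
        have harg : t + (i - t + 1) = i + 1 := by omega
        rw [harg]
        refine swap_apply_of_ne_of_ne ?_ ?_
        · intro h
          have := cycle_pow_inj hg ha (i := i+1) (j := 0) (by omega) (by omega) (by simpa using h)
          omega
        · intro h
          have := cycle_pow_inj hg ha (i := i+1) (j := t) (by omega) htm h
          omega
      · have hieq : i + 1 = m := by omega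
        have hmod : (i - t + 1) % (m - t) = 0 := by
          have : i - t + 1 = m - t := by omega
          rw [this, Nat.mod_self]
        rw [hmod, hieq]
        have hgm : (g ^ m) a = a := by
          have : g ^ m = 1 := by
            rw [hm, ← hg.orderOf]; exact pow_orderOf_eq_one g
          rw [this]; rfl
        rw [hgm, swap_apply_left]
        simp
  · have hgxx : g x = x := by rwa [← Equiv.Perm.notMem_support]
    have hxa : x ≠ a := by
      intro h; subst h; exact hx (by simpa using hmem 0)
    have hxt : x ≠ (g ^ t) a := by
      intro h; rw [h] at hx; exact hx (hmem t)
    have hno1 : x ∉ l1 := fun h => hx (by obtain ⟨i, _, rfl⟩ := hmem1 x h; exact hmem i)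
    have hno2 : x ∉ l2 := fun h => hx (by obtain ⟨i, _, rfl⟩ := hmem2 x h; exact hmem _)
    rw [List.formPerm_apply_of_notMem hno2, List.formPerm_apply_of_notMem hno1, hgxx,
      swap_apply_of_ne_of_ne hxa hxt]

end KeyFact

section KeyData
variable {g : Perm β} {a : β}

lemma key_data (hg : g.IsCycle) (ha : g a ≠ a) {t : ℕ} (ht1 : 1 ≤ t)
    (htm : t < g.support.card) :
    gmoeb (swap a ((g ^ t) a) * g) = Fcat t * Fcat (g.support.card - t) ∧
    ell (swap a ((g ^ t) a) * g) = (t - 1) + (g.support.card - t - 1) := by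
  set m := g.support.card with hm
  set l1 : List β := (List.range t).map (fun i => (g ^ i) a) with hl1
  set l2 : List β := (List.range (m - t)).map (fun i => (g ^ (t + i)) a) with hl2
  have hlen1 : l1.length = t := by simp [hl1]
  have hlen2 : l2.length = m - t := by simp [hl2]
  have hn1 : l1.Nodup := by
    refine List.Nodup.map_on ?_ (List.nodup_range (n := t))
    intro i hi j hj hij
    exact cycle_pow_inj hg ha (lt_trans (List.mem_range.mp hi) htm)
      (lt_trans (List.mem_range.mp hj) htm) hij
  have hn2 : l2.Nodup := by
    refine List.Nodup.map_on ?_ (List.nodup_range (n := m - t))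
    intro i hi j hj hij
    have := cycle_pow_inj hg ha (i := t + i) (j := t + j)
      (by have := List.mem_range.mp hi; omega) (by have := List.mem_range.mp hj; omega) hij
    omega
  have hdisj : l1.Disjoint l2 := by
    intro x hx1 hx2
    rw [hl1, List.mem_map] at hx1
    obtain ⟨i, hi, rfl⟩ := hx1
    rw [hl2, List.mem_map] at hx2
    obtain ⟨i', hi', he⟩ := hx2
    rw [List.mem_range] at hi hi'
    have := cycle_pow_inj hg ha (i := t + i') (j := i) (by omega) (by omega) he
    omega
  have hne1 : l1 ≠ [] := by
    intro h; have := hlen1; rw [h] at this; simp at this; omega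
  have hne2 : l2 ≠ [] := by
    intro h; have := hlen2; rw [h] at this; simp at this; omega
  have hpdisj : l1.formPerm.Disjoint l2.formPerm := by
    rw [disjoint_iff_disjoint_support]
    refine Finset.disjoint_of_subset_left (List.support_formPerm_le l1)
      (Finset.disjoint_of_subset_right (List.support_formPerm_le l2) ?_)
    rw [Finset.disjoint_left]
    intro x hx1 hx2
    exact hdisj (List.mem_toFinset.mp hx1) (List.mem_toFinset.mp hx2)
  rw [key_factorization hg ha ht1 htm]
  rw [gmoeb_mul_of_disjoint hpdisj, ell_mul_of_disjoint hpdisj,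
    gmoeb_formPerm hn1 hne1, gmoeb_formPerm hn2 hne2,
    ell_formPerm hn1 hne1, ell_formPerm hn2 hne2, hlen1, hlen2]
  exact ⟨rfl, rfl⟩

end KeyData

lemma swap_support_le {σ : Perm β} {a b : β} (ha : a ∈ σ.support) (hb : b ∈ σ.support) :
    (swap a b * σ).support ⊆ σ.support := by
  refine subset_trans (Equiv.Perm.support_mul_le _ _) ?_
  intro x hx
  rcases Finset.mem_union.mp hx with hx | hx
  · by_cases hab : a = b
    · subst hab; rw [Equiv.swap_self] at hx; simp at hx
    · rw [Equiv.Perm.support_swap hab] at hx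
      rcases Finset.mem_insert.mp hx with h | h
      · subst h; exact ha
      · rw [Finset.mem_singleton.mp h]; exact hb
  · exact hx

/-- decomposition of a general permutation at a non-fixed point -/
lemma split_decomp (σ : Perm β) {a : β} (ha : σ a ≠ a) {b : β} (hb : b ∈ (σ.cycleOf a).support) :
    σ = (σ * (σ.cycleOf a)⁻¹) * σ.cycleOf a ∧
    (σ * (σ.cycleOf a)⁻¹).Disjoint (σ.cycleOf a) ∧
    swap a b * σ = (σ * (σ.cycleOf a)⁻¹) * (swap a b * σ.cycleOf a) ∧
    (σ * (σ.cycleOf a)⁻¹).Disjoint (swap a b * σ.cycleOf a) := by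
  set g := σ.cycleOf a with hg
  set h := σ * g⁻¹ with hh
  have hmem : g ∈ σ.cycleFactorsFinset := cycleOf_mem_cycleFactorsFinset_iff.mpr (mem_support.mpr ha)
  have hdisj : h.Disjoint g := disjoint_mul_inv_of_mem_cycleFactorsFinset hmem
  have hσ : σ = h * g := by rw [hh, inv_mul_cancel_right]
  have hamem : a ∈ g.support := by
    rw [mem_support, hg, cycleOf_apply_self]; exact ha
  have hdisj2 : h.Disjoint (swap a b * g) := by
    rw [disjoint_iff_disjoint_support] at hdisj ⊢
    exact Finset.disjoint_of_subset_right (swap_support_le hamem hb) hdisj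
  have hsw : h.Disjoint (swap a b) := by
    rw [disjoint_iff_disjoint_support] at hdisj ⊢
    refine Finset.disjoint_of_subset_right ?_ hdisj
    by_cases hab : a = b
    · subst hab; rw [Equiv.swap_self]; simp
    · rw [Equiv.Perm.support_swap hab]
      intro x hx
      rcases Finset.mem_insert.mp hx with hx | hx
      · subst hx; exact hamem
      · rw [Finset.mem_singleton.mp hx]; exact hb
  refine ⟨hσ, hdisj, ?_, hdisj2⟩
  calc swap a b * σ = swap a b * (h * g) := by rw [← hσ]
    _ = swap a b * h * g := (mul_assoc _ _ _).symm
    _ = h * swap a b * g := by rw [(hsw.symm).commute.eq]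
    _ = h * (swap a b * g) := mul_assoc _ _ _

lemma orbit_enum (σ : Perm β) {a b : β} (hab : a ≠ b) (hsc : σ.SameCycle a b) :
    ∃ t, 1 ≤ t ∧ t < (σ.cycleOf a).support.card ∧ (σ ^ t) a = b := by
  have ha : σ a ≠ a := by
    intro h; exact hab (hsc.eq_of_left h)
  set g := σ.cycleOf a with hg
  have hgc : g.IsCycle := isCycle_cycleOf σ ha
  have hb : b ∈ g.support := mem_support_cycleOf_iff.mpr ⟨hsc, mem_support.mpr ha⟩
  have hga : g a ≠ a := by rw [hg, cycleOf_apply_self]; exact ha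
  have hscg : g.SameCycle a b := hgc.sameCycle hga (mem_support.mp hb)
  obtain ⟨i, hio, hie⟩ := hscg.exists_pow_eq'
  rw [hgc.orderOf] at hio
  have hi0 : i ≠ 0 := by rintro rfl; exact hab (by simpa using hie)
  refine ⟨i, by omega, hio, ?_⟩
  rw [← cycleOf_pow_apply_self σ a i]; exact hie

lemma cycleOf_two_le {σ : Perm β} {a : β} (ha : σ a ≠ a) :
    2 ≤ (σ.cycleOf a).support.card :=
  (isCycle_cycleOf σ ha).two_le_card_support

lemma mem_support_cycleOf_pow {σ : Perm β} {a : β} (ha : σ a ≠ a) (t : ℕ) :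
    (σ ^ t) a ∈ (σ.cycleOf a).support :=
  mem_support_cycleOf_iff.mpr ⟨⟨(t : ℤ), by rw [zpow_natCast]⟩, mem_support.mpr ha⟩

lemma split_gmoeb (σ : Perm β) {a : β} (ha : σ a ≠ a) {t : ℕ} (ht1 : 1 ≤ t)
    (htm : t < (σ.cycleOf a).support.card) :
    Fcat ((σ.cycleOf a).support.card) * gmoeb (swap a ((σ ^ t) a) * σ)
      = Fcat t * Fcat ((σ.cycleOf a).support.card - t) * gmoeb σ := by
  set g := σ.cycleOf a with hg
  have hgc : g.IsCycle := isCycle_cycleOf σ ha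
  have hga : g a ≠ a := by rw [hg, cycleOf_apply_self]; exact ha
  have hpow : (σ ^ t) a = (g ^ t) a := (cycleOf_pow_apply_self σ a t).symm
  obtain ⟨hσ, hdisj, hτ, hdisj2⟩ := split_decomp σ ha (mem_support_cycleOf_pow ha t)
  have hkey := key_data hgc hga ht1 htm
  rw [hpow] at hτ hdisj2 ⊢
  rw [hτ, gmoeb_mul_of_disjoint hdisj2, hkey.1]
  conv_rhs => rw [hσ, gmoeb_mul_of_disjoint hdisj, gmoeb_isCycle hgc]
  ring

lemma split_ell (σ : Perm β) {a b : β} (hab : a ≠ b) (hsc : σ.SameCycle a b) :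
    ell (swap a b * σ) + 1 = ell σ := by
  have ha : σ a ≠ a := by intro h; exact hab (hsc.eq_of_left h)
  obtain ⟨t, ht1, htm, hb⟩ := orbit_enum σ hab hsc
  subst hb
  set g := σ.cycleOf a with hg
  have hgc : g.IsCycle := isCycle_cycleOf σ ha
  have hga : g a ≠ a := by rw [hg, cycleOf_apply_self]; exact ha
  have hpow : (σ ^ t) a = (g ^ t) a := (cycleOf_pow_apply_self σ a t).symm
  obtain ⟨hσ, hdisj, hτ, hdisj2⟩ := split_decomp σ ha (mem_support_cycleOf_pow ha t)
  have hkey := key_data hgc hga ht1 htm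
  have h2 : 2 ≤ g.support.card := hgc.two_le_card_support
  rw [hpow] at hτ hdisj2 ⊢
  rw [hτ, ell_mul_of_disjoint hdisj2, hkey.2]
  conv_rhs => rw [hσ, ell_mul_of_disjoint hdisj, ell_isCycle hgc]
  omega

lemma sameCycle_swap_mul {σ : Perm β} {a b : β} (hab : a ≠ b) (h : ¬ σ.SameCycle a b) :
    (swap a b * σ).SameCycle a b := by
  set τ := swap a b * σ with hτdef
  have hτ : ∀ x, τ x = swap a b (σ x) := fun x => rfl
  set S : Set ℕ := {n | 0 < n ∧ (σ ^ n) a = a} with hS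
  have hSne : S.Nonempty := ⟨orderOf σ, orderOf_pos σ, by rw [pow_orderOf_eq_one]; rfl⟩
  set n := sInf S with hn
  have hnS : n ∈ S := Nat.sInf_mem hSne
  have hmin : ∀ i, 0 < i → i < n → (σ ^ i) a ≠ a := by
    intro i hi0 hin he
    have : n ≤ i := Nat.sInf_le ⟨hi0, he⟩
    omega
  have hnotb : ∀ i : ℕ, (σ ^ i) a ≠ b := by
    intro i he
    exact h ⟨(i : ℤ), by rw [zpow_natCast]; exact he⟩
  have key : ∀ i, i < n → (τ ^ i) a = (σ ^ i) a := by
    intro i hi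
    induction i with
    | zero => rfl
    | succ i ih =>
      rw [pow_succ', Equiv.Perm.mul_apply, ih (by omega)]
      rw [hτ]
      have hσs : σ ((σ ^ i) a) = (σ ^ (i+1)) a := by rw [pow_succ', Equiv.Perm.mul_apply]
      rw [hσs]
      exact swap_apply_of_ne_of_ne (hmin (i+1) (by omega) hi) (hnotb (i+1))
  have hn1 : 0 < n := hnS.1
  have hfin : (τ ^ n) a = b := by
    have h1 : (τ ^ n) a = τ ((τ ^ (n-1)) a) := by
      rw [← Equiv.Perm.mul_apply, ← pow_succ']
      congr 2
      omega
    rw [h1, key (n-1) (by omega), hτ]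
    have h2 : σ ((σ ^ (n-1)) a) = (σ ^ n) a := by
      rw [← Equiv.Perm.mul_apply, ← pow_succ']
      congr 2
      omega
    rw [h2, hnS.2, swap_apply_left]
  exact ⟨(n : ℤ), by rw [zpow_natCast]; exact hfin⟩

lemma ell_swap_mul_of_not_sameCycle {σ : Perm β} {a b : β} (hab : a ≠ b)
    (h : ¬ σ.SameCycle a b) : ell (swap a b * σ) = ell σ + 1 := by
  have h2 := sameCycle_swap_mul hab h
  have h3 := split_ell (swap a b * σ) hab h2
  rw [← mul_assoc, swap_mul_self, one_mul] at h3
  omega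

lemma permLength_min (σ : Perm β) :
    ∃ l : List (Perm β), l.length = permLength σ ∧ (∀ τ ∈ l, τ.IsSwap) ∧ l.prod = σ := by
  have hne : {n | ∃ l : List (Perm β), l.length = n ∧ (∀ τ ∈ l, τ.IsSwap) ∧ l.prod = σ}.Nonempty := by
    obtain ⟨l, hl1, hl2⟩ := (Equiv.Perm.truncSwapFactors σ).out
    exact ⟨l.length, l, rfl, hl2, hl1⟩
  exact Nat.sInf_mem hne

lemma permLength_le {σ : Perm β} {l : List (Perm β)} (hsw : ∀ τ ∈ l, τ.IsSwap)
    (hp : l.prod = σ) : permLength σ ≤ l.length :=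
  Nat.sInf_le ⟨l, rfl, hsw, hp⟩

lemma permLength_one : permLength (1 : Perm β) = 0 :=
  Nat.eq_zero_of_le_zero (permLength_le (l := []) (by simp) rfl)

lemma permLength_mul_le (f g : Perm β) : permLength (f * g) ≤ permLength f + permLength g := by
  obtain ⟨l1, hl1, hsw1, hp1⟩ := permLength_min f
  obtain ⟨l2, hl2, hsw2, hp2⟩ := permLength_min g
  have := permLength_le (σ := f * g) (l := l1 ++ l2) ?_ ?_
  · rwa [List.length_append, hl1, hl2] at this
  · intro τ hτ
    rcases List.mem_append.mp hτ with h | h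
    · exact hsw1 τ h
    · exact hsw2 τ h
  · rw [List.prod_append, hp1, hp2]

lemma ell_prod_le (l : List (Perm β)) (hsw : ∀ τ ∈ l, τ.IsSwap) : ell l.prod ≤ l.length := by
  induction l with
  | nil => simp [ell_one]
  | cons s l ih =>
    obtain ⟨a, b, hab, rfl⟩ := hsw s (List.mem_cons_self (a := s) (l := l))
    rw [List.prod_cons]
    by_cases hsc : (l.prod).SameCycle a b
    · have := split_ell l.prod hab hsc
      have := ih (fun τ hτ => hsw τ (List.mem_cons_of_mem _ hτ))
      simp only [List.length_cons]
      omega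
    · rw [ell_swap_mul_of_not_sameCycle hab hsc]
      have := ih (fun τ hτ => hsw τ (List.mem_cons_of_mem _ hτ))
      simp only [List.length_cons]
      omega

theorem permLength_eq_ell (σ : Perm β) : permLength σ = ell σ := by
  refine le_antisymm ?_ ?_
  · -- upper bound, strong induction on support card
    suffices H : ∀ n (σ : Perm β), σ.support.card = n → permLength σ ≤ ell σ from H _ σ rfl
    intro n
    induction n using Nat.strong_induction_on with
    | _ n IH =>
      intro σ hcard
      by_cases h1 : σ = 1
      · subst h1; rw [permLength_one, ell_one]
      · have ⟨a, ha⟩ : ∃ a, σ a ≠ a := by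
          by_contra hc
          push_neg at hc
          exact h1 (Equiv.ext fun x => by rw [hc x]; rfl)
        set τ := swap a (σ a) * σ with hτ
        have hlt : τ.support.card < σ.support.card := card_support_swap_mul ha
        have hne : a ≠ σ a := fun h => ha h.symm
        have hsc : σ.SameCycle a (σ a) := ⟨1, by rw [zpow_one]⟩
        have hsplit := split_ell σ hne hsc
        rw [← hτ] at hsplit
        have hIH := IH τ.support.card (by omega) τ rfl
        have hback : σ = swap a (σ a) * τ := by
          rw [hτ, ← mul_assoc, swap_mul_self, one_mul]
        obtain ⟨l, hl, hswl, hpl⟩ := permLength_min τ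
        have hle : permLength σ ≤ permLength τ + 1 := by
          have := permLength_le (σ := σ) (l := swap a (σ a) :: l) ?_ ?_
          · simpa [hl] using this
          · intro τ' hτ'
            rcases List.mem_cons.mp hτ' with h | h
            · exact h ▸ ⟨a, σ a, hne, rfl⟩
            · exact hswl τ' h
          · rw [List.prod_cons, hpl, ← hback]
        omega
  · obtain ⟨l, hl, hsw, hp⟩ := permLength_min σ
    have := ell_prod_le l hsw
    rw [hp, hl] at this
    exact this

lemma permLength_split {σ : Perm β} {a b : β} (hab : a ≠ b) (hsc : σ.SameCycle a b) :
    permLength (swap a b * σ) + 1 = permLength σ := by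
  rw [permLength_eq_ell, permLength_eq_ell]; exact split_ell σ hab hsc

lemma permLength_merge {σ : Perm β} {a b : β} (hab : a ≠ b) (h : ¬ σ.SameCycle a b) :
    permLength (swap a b * σ) = permLength σ + 1 := by
  rw [permLength_eq_ell, permLength_eq_ell]; exact ell_swap_mul_of_not_sameCycle hab h


lemma catalan_id {m : ℕ} (hm : 2 ≤ m) :
    Fcat m + ∑ t ∈ Finset.Ico 1 m, Fcat t * Fcat (m - t) = 0 := by
  obtain ⟨n, rfl⟩ : ∃ n, m = n + 2 := ⟨m - 2, by omega⟩
  have h1 : ∑ t ∈ Finset.Ico 1 (n + 2), Fcat t * Fcat (n + 2 - t)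
      = ∑ i ∈ Finset.range (n + 1), Fcat (1 + i) * Fcat (n + 2 - (1 + i)) := by
    rw [Finset.sum_Ico_eq_sum_range]
    norm_num
  have h2 : ∀ i ∈ Finset.range (n + 1),
      Fcat (1 + i) * Fcat (n + 2 - (1 + i))
        = (-1 : ℂ) ^ n * ((catalan i : ℂ) * (catalan (n - i) : ℂ)) := by
    intro i hi
    rw [Finset.mem_range] at hi
    have e1 : (1 + i) - 1 = i := by omega
    have e2 : (n + 2 - (1 + i)) - 1 = n - i := by omega
    rw [Fcat, Fcat, e1, e2]
    have e3 : (-1 : ℂ) ^ i * (-1 : ℂ) ^ (n - i) = (-1 : ℂ) ^ n := by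
      rw [← pow_add]; congr 1; omega
    ring_nf
    rw [← e3]
    ring
  rw [h1, Finset.sum_congr rfl h2, ← Finset.mul_sum]
  have h3 : ∑ i ∈ Finset.range (n + 1), (catalan i : ℂ) * (catalan (n - i) : ℂ)
      = (catalan (n + 1) : ℂ) := by
    rw [catalan_succ]
    push_cast
    rw [Fin.sum_univ_eq_sum_range (fun i => (catalan i : ℂ) * (catalan (n - i) : ℂ)) (n + 1)]
  rw [h3, Fcat]
  have e4 : n + 2 - 1 = n + 1 := by omega
  rw [e4, pow_succ]
  ring

theorem crux (αp γ : Perm β) {j : β} (hj : αp j ≠ j) :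
    ∑ b ∈ Finset.univ.filter
        (fun b : Perm β => geoLe b αp ∧ swap j (b j) * b = γ),
      gmoeb (b⁻¹ * αp) = 0 := by
  by_cases hγj : γ j = j
  swap
  · rw [Finset.filter_false_of_mem, Finset.sum_empty]
    rintro b - ⟨-, hswap⟩
    apply hγj
    rw [← hswap]
    simp [Equiv.Perm.mul_apply]
  · -- main case
    set w : Perm β := γ⁻¹ * αp with hw
    have hγinvj : γ⁻¹ j = j := by
      conv_lhs => rw [← hγj]
      simp
    have hwj : w j ≠ j := by
      intro h
      rw [hw, Equiv.Perm.mul_apply] at h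
      apply hj
      have : αp j = γ j := by
        have := congrArg γ h
        simpa using this
      rw [this, hγj]
    set e : β → Perm β := fun k' => swap j (γ k') * γ with he
    have hej : ∀ k', (e k') j = γ k' := by
      intro k'
      rw [he]
      simp only [Equiv.Perm.mul_apply, hγj]
      exact swap_apply_left j (γ k')
    have heinj : ∀ k₁ k₂, e k₁ = e k₂ → k₁ = k₂ := by
      intro k₁ k₂ h
      have := congrArg (fun σ : Perm β => σ j) h
      simp only [hej] at this
      exact γ.injective this
    have hconj : ∀ k', (e k')⁻¹ * αp = swap j k' * w := by
      intro k'
      rw [he]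
      simp only [mul_inv_rev, Equiv.swap_inv]
      have hcon : γ⁻¹ * swap j (γ k') = swap j k' * γ⁻¹ := by
        have := Equiv.swap_apply_apply γ⁻¹ j (γ k')
        rw [hγinvj] at this
        simp only [Equiv.Perm.coe_inv, Equiv.symm_apply_apply] at this
        rw [this]
        group
      rw [hw, ← mul_assoc, hcon]
    have hset : Finset.univ.filter (fun b : Perm β => geoLe b αp ∧ swap j (b j) * b = γ)
        = (Finset.univ.filter (fun k' => geoLe (e k') αp)).image e := by
      ext b
      simp only [Finset.mem_filter, Finset.mem_image, Finset.mem_univ, true_and]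
      constructor
      · rintro ⟨hgeo, hswap⟩
        refine ⟨γ⁻¹ (b j), ?_, ?_⟩
        · have hb : e (γ⁻¹ (b j)) = b := by
            rw [he]
            simp only [Equiv.Perm.coe_inv, Equiv.apply_symm_apply]
            rw [← hswap, ← mul_assoc, swap_mul_self, one_mul]
          rwa [hb]
        · rw [he]
          simp only [Equiv.Perm.coe_inv, Equiv.apply_symm_apply]
          rw [← hswap, ← mul_assoc, swap_mul_self, one_mul]
      · rintro ⟨k', hgeo, rfl⟩
        refine ⟨hgeo, ?_⟩
        rw [hej, he, ← mul_assoc, swap_mul_self, one_mul]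
    rw [hset, Finset.sum_image (fun k₁ _ k₂ _ h => heinj k₁ k₂ h)]
    have hterm : ∀ k', gmoeb ((e k')⁻¹ * αp) = gmoeb (swap j k' * w) := fun k' => by
      rw [hconj]
    have hcond : ∀ k', geoLe (e k') αp ↔
        permLength (e k') + permLength (swap j k' * w) = permLength αp := by
      intro k'
      rw [geoLe, hconj]
    have hLej : e j = γ := by
      show swap j (γ j) * γ = γ
      rw [hγj, Equiv.swap_self]
      exact one_mul γ
    have hLe : ∀ k', k' ≠ j → permLength (e k') = permLength γ + 1 := by
      intro k' hk'
      rw [he]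
      refine permLength_merge ?_ ?_
      · intro h
        exact hk' (γ.injective (by rw [← h, hγj]))
      · intro h
        have := h.eq_of_left (by rw [Function.IsFixedPt, hγj])
        exact hk' (γ.injective (by rw [← this, hγj]))
    have hswapw : ∀ k', k' ≠ j →
        permLength (swap j k' * w) + 1 = permLength w ∨
        permLength (swap j k' * w) = permLength w + 1 := by
      intro k' hk'
      by_cases hsc : w.SameCycle j k'
      · exact Or.inl (permLength_split (Ne.symm hk') hsc)
      · exact Or.inr (permLength_merge (Ne.symm hk') hsc)
    have hsub : permLength αp ≤ permLength γ + permLength w := by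
      have : γ * w = αp := by rw [hw, ← mul_assoc, mul_inv_cancel, one_mul]
      calc permLength αp = permLength (γ * w) := by rw [this]
        _ ≤ _ := permLength_mul_le γ w
    by_cases hle : permLength γ + permLength w = permLength αp
    · -- geodesic case
      have hDeq : Finset.univ.filter (fun k' => geoLe (e k') αp)
          = insert j (Finset.univ.filter (fun k' => k' ≠ j ∧ w.SameCycle j k')) := by
        ext k'
        simp only [Finset.mem_filter, Finset.mem_insert, Finset.mem_univ, true_and]
        by_cases hk' : k' = j
        · subst hk'
          simp only [true_or, iff_true]
          rw [hcond]
          rw [hLej]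
          rw [Equiv.swap_self]
          show permLength γ + permLength (Equiv.refl β * w) = permLength αp
          rw [show (Equiv.refl β : Perm β) = 1 from rfl, one_mul]
          exact hle
        · simp only [hk', false_or]
          rw [hcond, hLe k' hk']
          constructor
          · intro hcnd
            refine ⟨hk', ?_⟩
            by_contra hsc
            have := permLength_merge (Ne.symm hk') hsc
            omega
          · rintro ⟨-, hsc⟩
            have := permLength_split (Ne.symm hk') hsc
            omega
      rw [hDeq]
      have hjnot : j ∉ Finset.univ.filter (fun k' => k' ≠ j ∧ w.SameCycle j k') := by
        simp
      rw [Finset.sum_insert hjnot]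
      simp only [hterm]
      rw [Equiv.swap_self]
      rw [show (Equiv.refl β : Perm β) = 1 from rfl, one_mul]
      -- now the Catalan cancellation
      set m := (w.cycleOf j).support.card with hm
      have hm2 : 2 ≤ m := (isCycle_cycleOf w hwj).two_le_card_support
      have hgc : (w.cycleOf j).IsCycle := isCycle_cycleOf w hwj
      have hgj : (w.cycleOf j) j ≠ j := by rw [cycleOf_apply_self]; exact hwj
      have hDim : Finset.univ.filter (fun k' => k' ≠ j ∧ w.SameCycle j k')
          = (Finset.Ico 1 m).image (fun t => (w ^ t) j) := by
        ext k'
        simp only [Finset.mem_filter, Finset.mem_image, Finset.mem_univ, true_and,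
          Finset.mem_Ico]
        constructor
        · rintro ⟨hk', hsc⟩
          obtain ⟨t, ht1, htm, hte⟩ := orbit_enum w (Ne.symm hk') hsc
          exact ⟨t, ⟨ht1, htm⟩, hte⟩
        · rintro ⟨t, ⟨ht1, htm⟩, rfl⟩
          constructor
          · intro h
            have h0 : (w ^ t) j = (w ^ 0) j := by simpa using h
            have e1 : (w ^ t) j = ((w.cycleOf j) ^ t) j := (cycleOf_pow_apply_self w j t).symm
            have e0 : (w ^ 0) j = ((w.cycleOf j) ^ 0) j := by simp
            rw [e1, e0] at h0
            have := cycle_pow_inj hgc hgj (by omega : t < (w.cycleOf j).support.card)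
              (by omega) h0
            omega
          · exact ⟨(t : ℤ), by rw [zpow_natCast]⟩
      rw [hDim]
      rw [Finset.sum_image ?hinj]
      case hinj =>
        intro t₁ h₁ t₂ h₂ h
        rw [Finset.mem_coe, Finset.mem_Ico] at h₁ h₂
        have e1 : (w ^ t₁) j = ((w.cycleOf j) ^ t₁) j := (cycleOf_pow_apply_self w j t₁).symm
        have e2 : (w ^ t₂) j = ((w.cycleOf j) ^ t₂) j := (cycleOf_pow_apply_self w j t₂).symm
        beta_reduce at h
        rw [e1, e2] at h
        exact cycle_pow_inj hgc hgj (by omega) (by omega) h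
      -- Catalan cancellation
      have hsum : ∀ t ∈ Finset.Ico 1 m,
          Fcat m * gmoeb (swap j ((w ^ t) j) * w) = Fcat t * Fcat (m - t) * gmoeb w := by
        intro t ht
        rw [Finset.mem_Ico] at ht
        exact split_gmoeb w hwj ht.1 ht.2
      have hfinal : Fcat m * (gmoeb w + ∑ t ∈ Finset.Ico 1 m, gmoeb (swap j ((w ^ t) j) * w))
          = 0 := by
        rw [mul_add, Finset.mul_sum, Finset.sum_congr rfl hsum]
        have : Fcat m * gmoeb w + ∑ t ∈ Finset.Ico 1 m, Fcat t * Fcat (m - t) * gmoeb w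
            = (Fcat m + ∑ t ∈ Finset.Ico 1 m, Fcat t * Fcat (m - t)) * gmoeb w := by
          rw [add_mul, Finset.sum_mul]
        rw [this, catalan_id hm2, zero_mul]
      have := mul_left_cancel₀ (Fcat_ne_zero m) (by rw [hfinal, mul_zero] :
        Fcat m * (gmoeb w + ∑ t ∈ Finset.Ico 1 m, gmoeb (swap j ((w ^ t) j) * w))
          = Fcat m * 0)
      exact this
    · -- non-geodesic case : empty sum
      rw [Finset.filter_false_of_mem, Finset.sum_empty]
      intro k' _
      rw [hcond]
      by_cases hk' : k' = j
      · subst hk'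
        rw [hLej, Equiv.swap_self]
        rw [show (Equiv.refl β : Perm β) = 1 from rfl, one_mul]
        exact hle
      · rw [hLe k' hk']
        intro h
        rcases hswapw k' hk' with h2 | h2
        · exact hle (by omega)
        · omega


lemma moeb_crux {p : ℕ} (αp γ : Perm (Fin p)) {j : Fin p} (hj : αp j ≠ j) :
    ∑ b ∈ Finset.univ.filter
        (fun b : Perm (Fin p) => geoLe b αp ∧ swap j (b j) * b = γ),
      moeb (b⁻¹ * αp) = 0 := crux αp γ hj

/-- key vanishing: a tensor free cumulant of an irreducible tuple vanishes
whenever one of its entries is the unit. -/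
theorem tensorCum_eq_zero_of_unit {r p : ℕ} {A : Type*} [Ring A] [Algebra ℂ A]
    (φ : ∀ q : ℕ, (Fin r → Equiv.Perm (Fin q)) → MultilinearMap ℂ (fun _ : Fin q => A) ℂ)
    (hunital : ∀ (q : ℕ) (α : Fin r → Equiv.Perm (Fin q)) (y : Fin q → A) (j : Fin q),
      y j = 1 → φ q α y = φ q (fun s => Equiv.swap j (α s j) * α s) y)
    (hp2 : 2 ≤ p) (α : Fin r → Perm (Fin p)) (hirr : IrreducibleTuple α)
    (y : Fin p → A) (j : Fin p) (hyj : y j = 1) :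
    tensorCum φ p α y = 0 := by
  -- some component moves j
  obtain ⟨s0, hs0⟩ : ∃ s, α s j ≠ j := by
    by_contra hc
    push_neg at hc
    set i : Fin p := if (j : ℕ) = 0 then ⟨1, by omega⟩ else ⟨0, by omega⟩ with hi
    have hij : i ≠ j := by
      rw [hi]
      by_cases h0 : (j : ℕ) = 0
      · simp only [h0, if_pos]
        intro h
        have := congrArg Fin.val h
        simp [h0] at this
      · simp only [h0, if_neg, Bool.false_eq_true]
        intro h
        have := congrArg Fin.val h
        simp at this
        exact h0 this.symm
    have key : ∀ u v : Fin p, Relation.EqvGen (fun a b => ∃ s, (α s).SameCycle a b) u v →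
        (u = j ↔ v = j) := by
      intro u v h
      induction h with
      | rel u v huv =>
        obtain ⟨s, hs⟩ := huv
        constructor
        · rintro rfl
          exact (hs.eq_of_left (hc s)).symm
        · rintro rfl
          exact hs.symm.eq_of_left (hc s) |>.symm
      | refl u => exact Iff.rfl
      | symm u v _ ih => exact ih.symm
      | trans u v w _ _ ih1 ih2 => exact ih1.trans ih2
    exact hij ((key j i (hirr j i)).mp rfl)
  -- rewrite each φ via hunital
  rw [tensorCum]
  have hstep : ∀ b : Fin r → Perm (Fin p),
      φ p b y = φ p (fun s => swap j (b s j) * b s) y := fun b => hunital p b y j hyj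
  rw [Finset.sum_congr rfl (fun b _ => by rw [hstep b])]
  -- group by fibers of the reduction map R
  set R : (Fin r → Perm (Fin p)) → (Fin r → Perm (Fin p)) :=
    fun b s => swap j (b s j) * b s with hR
  set T : Finset (Fin r → Perm (Fin p)) :=
    Finset.univ.filter (fun b => ∀ s, geoLe (b s) (α s)) with hT
  rw [← Finset.sum_fiberwise_of_maps_to (g := R) (t := T.image R)
    (fun b hb => Finset.mem_image_of_mem R hb)]
  refine Finset.sum_eq_zero (fun γ hγ => ?_)
  have hinner : ∀ b ∈ T.filter (fun b => R b = γ),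
      φ p (fun s => swap j (b s j) * b s) y * ∏ s, moeb ((b s)⁻¹ * α s)
        = φ p γ y * ∏ s, moeb ((b s)⁻¹ * α s) := by
    intro b hb
    rw [Finset.mem_filter] at hb
    have : (fun s => swap j (b s j) * b s) = γ := hb.2
    rw [this]
  rw [Finset.sum_congr rfl hinner, ← Finset.mul_sum]
  -- factorize the fiber sum over components
  have hfiber : T.filter (fun b => R b = γ)
      = Fintype.piFinset (fun s => Finset.univ.filter
          (fun c : Perm (Fin p) => geoLe c (α s) ∧ swap j (c j) * c = γ s)) := by
    ext b
    rw [Fintype.mem_piFinset, Finset.mem_filter, hT, Finset.mem_filter]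
    simp only [Finset.mem_univ, true_and, Finset.mem_filter]
    constructor
    · rintro ⟨hgeo, hfib⟩
      intro s
      exact ⟨hgeo s, congrFun hfib s⟩
    · intro h
      exact ⟨fun s => (h s).1, funext (fun s => (h s).2)⟩
  rw [hfiber]
  rw [← Finset.prod_univ_sum (fun s => Finset.univ.filter
      (fun c : Perm (Fin p) => geoLe c (α s) ∧ swap j (c j) * c = γ s))
      (fun s c => moeb (c⁻¹ * α s))]
  rw [Finset.prod_eq_zero (Finset.mem_univ s0) (moeb_crux (α s0) (γ s0) hs0), mul_zero]


variable {r : ℕ} {A : Type*} [Ring A] [Algebra ℂ A]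

/-- the cumulant as a bundled multilinear map -/
noncomputable def Kmap (φ : ∀ p : ℕ, (Fin r → Equiv.Perm (Fin p)) → MultilinearMap ℂ (fun _ : Fin p => A) ℂ)
    (p : ℕ) (α : Fin r → Equiv.Perm (Fin p)) : MultilinearMap ℂ (fun _ : Fin p => A) ℂ :=
  ∑ b ∈ Finset.univ.filter
      (fun b : Fin r → Equiv.Perm (Fin p) => ∀ s, geoLe (b s) (α s)),
    (∏ s, moeb ((b s)⁻¹ * α s)) • φ p b

lemma tensorCum_apply (φ : ∀ p : ℕ, (Fin r → Equiv.Perm (Fin p)) → MultilinearMap ℂ (fun _ : Fin p => A) ℂ)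
    (p : ℕ) (α : Fin r → Equiv.Perm (Fin p)) (v : Fin p → A) :
    tensorCum φ p α v = Kmap φ p α v := by
  rw [tensorCum, Kmap, MultilinearMap.sum_apply]
  refine Finset.sum_congr rfl (fun b _ => ?_)
  rw [MultilinearMap.smul_apply, smul_eq_mul, mul_comm]

lemma tensorCum_ident (φ : ∀ p : ℕ, (Fin r → Equiv.Perm (Fin p)) → MultilinearMap ℂ (fun _ : Fin p => A) ℂ)
    (x : ℕ → A)
    (hident : ∀ (p : ℕ) (b : Fin r → Equiv.Perm (Fin p)) (i : ℕ),
      φ p b (fun _ => x i) = φ p b (fun _ => x 0))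
    (p : ℕ) (α : Fin r → Equiv.Perm (Fin p)) (i : ℕ) :
    tensorCum φ p α (fun _ => x i) = tensorCum φ p α (fun _ => x 0) := by
  rw [tensorCum, tensorCum]
  exact Finset.sum_congr rfl (fun b _ => by rw [hident p b i])

lemma centered_eq (φ : ∀ p : ℕ, (Fin r → Equiv.Perm (Fin p)) → MultilinearMap ℂ (fun _ : Fin p => A) ℂ)
    (hunital : ∀ (q : ℕ) (α : Fin r → Equiv.Perm (Fin q)) (y : Fin q → A) (j : Fin q),
      y j = 1 → φ q α y = φ q (fun s => Equiv.swap j (α s j) * α s) y)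
    {p : ℕ} (hp2 : 2 ≤ p) (α : Fin r → Perm (Fin p)) (hirr : IrreducibleTuple α)
    (x : ℕ → A) (m : ℂ) (f : Fin p → ℕ) :
    Kmap φ p α (fun k => x (f k) - m • 1) = Kmap φ p α (fun k => x (f k)) := by
  have hdecomp : (fun k => x (f k) - m • (1 : A))
      = (fun k => x (f k)) + (fun _ => (-m) • (1 : A)) := by
    funext k
    rw [Pi.add_apply, neg_smul, ← sub_eq_add_neg]
  rw [hdecomp, MultilinearMap.map_add_univ]
  rw [Finset.sum_eq_single_of_mem (Finset.univ : Finset (Fin p)) (Finset.mem_univ _) ?hz]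
  · rw [Finset.piecewise_univ]
  case hz =>
    intro S _ hSne
    obtain ⟨j, hj⟩ : ∃ j, j ∉ S := by
      by_contra hcon
      push_neg at hcon
      exact hSne (Finset.eq_univ_iff_forall.mpr hcon)
    have hvec : S.piecewise (fun k => x (f k)) (fun _ => (-m) • (1 : A))
        = fun k => (if k ∈ S then (1 : ℂ) else -m) • (if k ∈ S then x (f k) else (1 : A)) := by
      funext k
      by_cases hk : k ∈ S
      · rw [Finset.piecewise_eq_of_mem _ _ _ hk, if_pos hk, if_pos hk, one_smul]
      · rw [Finset.piecewise_eq_of_notMem _ _ _ hk, if_neg hk, if_neg hk]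
    rw [hvec, MultilinearMap.map_smul_univ]
    have h0 : Kmap φ p α (fun k => if k ∈ S then x (f k) else (1 : A)) = 0 := by
      rw [← tensorCum_apply]
      exact tensorCum_eq_zero_of_unit φ hunital hp2 α hirr _ j (by rw [if_neg hj])
    rw [h0, smul_zero]

lemma tensorCum_one_dim (φ : ∀ p : ℕ, (Fin r → Equiv.Perm (Fin p)) → MultilinearMap ℂ (fun _ : Fin p => A) ℂ)
    (α : Fin r → Perm (Fin 1)) (v : Fin 1 → A) :
    tensorCum φ 1 α v = φ 1 α v := by
  have honeP : ∀ σ : Perm (Fin 1), σ = 1 := fun σ => Equiv.ext fun i => Subsingleton.elim _ _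
  have hgeo : ∀ σ : Perm (Fin 1), geoLe σ σ := by
    intro σ
    rw [geoLe, honeP σ, inv_one, one_mul, permLength_one]
  have hset : (Finset.univ.filter (fun b : Fin r → Perm (Fin 1) => ∀ s, geoLe (b s) (α s)))
      = {α} := by
    ext b
    simp only [Finset.mem_filter, Finset.mem_univ, true_and, Finset.mem_singleton]
    constructor
    · intro _
      funext s
      rw [honeP (b s), honeP (α s)]
    · rintro rfl
      exact fun s => hgeo _
  rw [tensorCum, hset, Finset.sum_singleton]
  have hmo : ∀ s : Fin r, moeb ((α s)⁻¹ * α s) = 1 := by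
    intro s
    rw [inv_mul_cancel, moeb, cycleFactorsFinset_one, Finset.prod_empty]
  rw [Finset.prod_congr rfl (fun s _ => hmo s), Finset.prod_const_one, mul_one]

lemma scalar_id {N p : ℕ} (hN : 1 ≤ N) :
    (((Real.sqrt N : ℂ))⁻¹) ^ p * (N : ℂ)
      = (((N : ℝ) ^ ((1 : ℝ) - (p : ℝ)/2) : ℝ) : ℂ) := by
  have hNpos : (0 : ℝ) < (N : ℝ) := by
    have : (1 : ℝ) ≤ (N : ℝ) := by exact_mod_cast hN
    linarith
  have h1 : ((Real.sqrt N : ℂ))⁻¹ = (((Real.sqrt N)⁻¹ : ℝ) : ℂ) := by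
    rw [Complex.ofReal_inv]
  rw [h1, ← Complex.ofReal_pow, ← Complex.ofReal_natCast N, ← Complex.ofReal_mul]
  congr 1
  rw [Real.sqrt_eq_rpow, ← Real.rpow_neg hNpos.le, ← Real.rpow_natCast ((N : ℝ) ^ (-(1/2) : ℝ)) p,
    ← Real.rpow_mul hNpos.le]
  calc (N : ℝ) ^ ((-(1/2) : ℝ) * p) * (N : ℝ)
      = (N : ℝ) ^ ((-(1/2) : ℝ) * p) * (N : ℝ) ^ (1 : ℝ) := by rw [Real.rpow_one]
    _ = (N : ℝ) ^ ((-(1/2) : ℝ) * p + 1) := by rw [← Real.rpow_add hNpos]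
    _ = (N : ℝ) ^ ((1 : ℝ) - (p : ℝ)/2) := by congr 1; ring

end

end TFClt

/-- Cumulant scaling in the tensor free central limit theorem: for identically tensor
distributed, tensor freely independent elements `x₁, x₂, …` of an `r`-partite tensor
probability space, and every irreducible tuple `α̲ ∈ (S_p)^r`,
`κ_{α̲}(x̄_N) = N^{1−p/2} κ_{α̲}(x₁ − φ(x₁)·1)`; consequently `κ_{α̲}(x̄_N)` converges, as
`N → ∞`, to `κ_{α̲}(x₁)` if `p = 2` and to `0` otherwise. -/
theorem tensor_free_CLT_cumulant_scaling
    {r : ℕ} {A : Type*} [Ring A] [Algebra ℂ A]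
    (φ : ∀ p : ℕ, (Fin r → Equiv.Perm (Fin p)) → MultilinearMap ℂ (fun _ : Fin p => A) ℂ)
    (hunital : ∀ (p : ℕ) (α : Fin r → Equiv.Perm (Fin p)) (y : Fin p → A) (j : Fin p),
      y j = 1 → φ p α y = φ p (fun s => Equiv.swap j (α s j) * α s) y)
    (hone : φ 1 (fun _ => 1) (fun _ => (1 : A)) = 1)
    (x : ℕ → A)
    (hident : ∀ (p : ℕ) (b : Fin r → Equiv.Perm (Fin p)) (i : ℕ),
      φ p b (fun _ => x i) = φ p b (fun _ => x 0))
    (hfree : ∀ (q : ℕ) (β : Fin r → Equiv.Perm (Fin q)), IrreducibleTuple β →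
      ∀ f : Fin q → ℕ, (∃ i j, f i ≠ f j) →
      tensorCum φ q β (fun i => x (f i)) = 0)
    (p : ℕ) (hp : 1 ≤ p) (α : Fin r → Equiv.Perm (Fin p)) (hirr : IrreducibleTuple α) :
    (∀ N : ℕ, 1 ≤ N →
      tensorCum φ p α (fun _ => centeredAvg φ x N)
        = (((N : ℝ) ^ ((1 : ℝ) - (p : ℝ)/2) : ℝ) : ℂ) *
            tensorCum φ p α
              (fun _ => x 0 - (φ 1 (fun _ => 1) (fun _ => x 0)) • (1 : A))) ∧
    Filter.Tendsto (fun N => tensorCum φ p α (fun _ => centeredAvg φ x N))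
      Filter.atTop
      (nhds (if p = 2 then tensorCum φ p α (fun _ => x 0) else 0)) := by
  classical
  set m : ℂ := φ 1 (fun _ => 1) (fun _ => x 0) with hm
  have hcs : ∀ N : ℕ, (∑ i ∈ Finset.range N, x i) - (N : ℂ) • (m • (1 : A))
      = ∑ i ∈ Finset.range N, (x i - m • 1) := by
    intro N
    have hn : ((N : ℕ) : ℂ) • (m • (1 : A)) = N • (m • (1 : A)) := Nat.cast_smul_eq_nsmul ℂ N _
    rw [Finset.sum_sub_distrib, Finset.sum_const, Finset.card_range, hn]
  have hca : ∀ N : ℕ, centeredAvg φ x N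
      = ((Real.sqrt N : ℂ))⁻¹ • (∑ i ∈ Finset.range N, (x i - m • 1)) := by
    intro N
    rw [centeredAvg, ← hm, hcs N]
  rcases Nat.lt_or_ge p 2 with hplt | hp2
  · -- p = 1
    obtain rfl : p = 1 := by omega
    have honeP : ∀ σ : Equiv.Perm (Fin 1), σ = 1 := fun σ => Equiv.ext fun i => Subsingleton.elim _ _
    have hα1 : α = (fun _ => 1) := funext fun s => honeP (α s)
    have hupd : ∀ a : A, (fun _ : Fin 1 => a) = Function.update (fun _ : Fin 1 => (0 : A)) 0 a := by
      intro a
      funext k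
      have hk : k = 0 := Subsingleton.elim k 0
      rw [hk, Function.update_self]
    have hmean : ∀ i, φ 1 α (fun _ => x i) = m := by
      intro i
      rw [hident 1 α i, hα1]
    have hφone : φ 1 α (fun _ => (1 : A)) = 1 := by rw [hα1]; exact hone
    have hy0 : ∀ i : ℕ, φ 1 α (fun _ => x i - m • 1) = 0 := by
      intro i
      rw [hupd (x i - m • (1 : A)), MultilinearMap.map_update_sub, ← hupd (x i),
        MultilinearMap.map_update_smul, ← hupd (1 : A),
        hmean i, hφone, smul_eq_mul, mul_one, sub_self]
    have hLHS0 : ∀ N : ℕ, tensorCum φ 1 α (fun _ => centeredAvg φ x N) = 0 := by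
      intro N
      rw [TFClt.tensorCum_one_dim]
      have h49 : (fun _ : Fin 1 => centeredAvg φ x N)
          = (fun _ : Fin 1 => ((Real.sqrt N : ℂ))⁻¹ • (∑ i ∈ Finset.range N, (x i - m • 1))) := by
        funext k; rw [hca N]
      rw [h49]
      rw [hupd (((Real.sqrt N : ℂ))⁻¹ • (∑ i ∈ Finset.range N, (x i - m • 1))),
        MultilinearMap.map_update_smul,
        ← hupd (∑ i ∈ Finset.range N, (x i - m • 1))]
      rw [MultilinearMap.map_sum_finset (φ 1 α) (fun _ (i : ℕ) => x i - m • (1 : A))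
        (fun _ : Fin 1 => Finset.range N)]
      rw [Finset.sum_eq_zero, smul_zero]
      intro f _
      have h50 : (fun k : Fin 1 => x (f k) - m • (1 : A)) = (fun _ : Fin 1 => x (f 0) - m • 1) := by
        funext k; rw [Subsingleton.elim k 0]
      rw [h50, hy0]
    refine ⟨?_, ?_⟩
    · intro N hN
      rw [hLHS0 N]
      have h51 : tensorCum φ 1 α (fun _ => x 0 - m • 1) = 0 := by
        rw [TFClt.tensorCum_one_dim, hy0 0]
      rw [h51, mul_zero]
    · have hif : (if 1 = 2 then tensorCum φ 1 α (fun _ => x 0) else 0) = 0 := by norm_num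
      rw [hif]
      have h52 : (fun N => tensorCum φ 1 α (fun _ => centeredAvg φ x N)) = (fun _ => (0 : ℂ)) :=
        funext hLHS0
      rw [h52]
      exact tendsto_const_nhds
  · -- p ≥ 2
    set j0 : Fin p := ⟨0, by omega⟩ with hj0
    have hcent : ∀ f : Fin p → ℕ,
        TFClt.Kmap φ p α (fun k => x (f k) - m • 1) = TFClt.Kmap φ p α (fun k => x (f k)) :=
      TFClt.centered_eq φ hunital hp2 α hirr x m
    have hX0 : tensorCum φ p α (fun _ => x 0 - m • 1) = tensorCum φ p α (fun _ => x 0) := by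
      rw [TFClt.tensorCum_apply, TFClt.tensorCum_apply]
      simpa using hcent (fun _ => 0)
    have hterm : ∀ f : Fin p → ℕ, TFClt.Kmap φ p α (fun k => x (f k))
        = if (∀ k, f k = f j0) then tensorCum φ p α (fun _ => x 0) else 0 := by
      intro f
      by_cases hconst : ∀ k, f k = f j0
      · rw [if_pos hconst, ← TFClt.tensorCum_apply]
        have h53 : (fun k => x (f k)) = (fun _ : Fin p => x (f j0)) :=
          funext fun k => by rw [hconst k]
        rw [h53]
        exact TFClt.tensorCum_ident φ x hident p α (f j0)
      · rw [if_neg hconst, ← TFClt.tensorCum_apply]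
        push_neg at hconst
        obtain ⟨k, hk⟩ := hconst
        exact hfree p α hirr f ⟨k, j0, hk⟩
    have hpart1 : ∀ N : ℕ, 1 ≤ N →
        tensorCum φ p α (fun _ => centeredAvg φ x N)
          = (((N : ℝ) ^ ((1 : ℝ) - (p : ℝ)/2) : ℝ) : ℂ) *
              tensorCum φ p α (fun _ => x 0 - m • 1) := by
      intro N hN
      rw [TFClt.tensorCum_apply]
      have h54 : (fun _ : Fin p => centeredAvg φ x N)
          = (fun k : Fin p => (fun _ : Fin p => ((Real.sqrt N : ℂ))⁻¹) k •
              (fun _ : Fin p => (∑ i ∈ Finset.range N, (x i - m • 1))) k) := by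
        funext k; rw [hca N]
      rw [h54, MultilinearMap.map_smul_univ]
      rw [MultilinearMap.map_sum_finset (TFClt.Kmap φ p α) (fun _ (i : ℕ) => x i - m • (1 : A))
        (fun _ : Fin p => Finset.range N)]
      have hsc : ∀ f ∈ Fintype.piFinset (fun _ : Fin p => Finset.range N),
          TFClt.Kmap φ p α (fun k => x (f k) - m • 1)
            = if (∀ k, f k = f j0) then tensorCum φ p α (fun _ => x 0) else 0 := by
        intro f _
        rw [hcent f, hterm f]
      rw [Finset.sum_congr rfl hsc, ← Finset.sum_filter, Finset.sum_const]
      have hcard : ((Fintype.piFinset (fun _ : Fin p => Finset.range N)).filter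
          (fun f => ∀ k, f k = f j0)).card = N := by
        refine Eq.trans (Finset.card_bij' (fun f _ => f j0) (fun i _ => (fun _ => i))
          ?_ ?_ ?_ ?_) (Finset.card_range N)
        · intro f hf
          rw [Finset.mem_filter, Fintype.mem_piFinset] at hf
          exact hf.1 j0
        · intro i hi
          rw [Finset.mem_filter, Fintype.mem_piFinset]
          exact ⟨fun _ => hi, fun _ => rfl⟩
        · intro f hf
          rw [Finset.mem_filter] at hf
          funext k
          exact (hf.2 k).symm
        · intro i _
          rfl
      rw [hcard, hX0]
      rw [Finset.prod_const, Finset.card_univ, Fintype.card_fin]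
      rw [smul_eq_mul, nsmul_eq_mul]
      rw [← TFClt.scalar_id hN (p := p)]
      ring
    refine ⟨hpart1, ?_⟩
    by_cases hp2' : p = 2
    · subst hp2'
      rw [if_pos rfl]
      have hev : ∀ N : ℕ, 1 ≤ N →
          tensorCum φ 2 α (fun _ => centeredAvg φ x N) = tensorCum φ 2 α (fun _ => x 0) := by
        intro N hN
        rw [hpart1 N hN, hX0]
        rw [show ((1 : ℝ) - ((2 : ℕ) : ℝ)/2) = 0 by norm_num, Real.rpow_zero]
        simp
      refine Filter.Tendsto.congr' ?_ tendsto_const_nhds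
      filter_upwards [Filter.eventually_ge_atTop 1] with N hN
      exact (hev N hN).symm
    · rw [if_neg hp2']
      have hp3 : 3 ≤ p := by omega
      have hexp : (0 : ℝ) < (p : ℝ)/2 - 1 := by
        have h55 : (3 : ℝ) ≤ (p : ℝ) := by exact_mod_cast hp3
        linarith
      have h2 : Filter.Tendsto (fun N : ℕ => ((N : ℝ) ^ ((1 : ℝ) - (p : ℝ)/2)))
          Filter.atTop (nhds 0) := by
        have h1 : Filter.Tendsto (fun X : ℝ => X ^ (-((p : ℝ)/2 - 1))) Filter.atTop (nhds 0) :=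
          tendsto_rpow_neg_atTop hexp
        have hco : (fun N : ℕ => ((N : ℝ) ^ ((1 : ℝ) - (p : ℝ)/2)))
            = (fun X : ℝ => X ^ (-((p : ℝ)/2 - 1))) ∘ (fun N : ℕ => (N : ℝ)) := by
          funext N
          simp only [Function.comp_apply]
          congr 1
          ring
        rw [hco]
        exact h1.comp tendsto_natCast_atTop_atTop
      have h3 : Filter.Tendsto (fun N : ℕ =>
          ((((N : ℝ) ^ ((1 : ℝ) - (p : ℝ)/2) : ℝ)) : ℂ) *
            tensorCum φ p α (fun _ => x 0 - m • 1)) Filter.atTop (nhds 0) := by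
        have h4 : Filter.Tendsto (fun N : ℕ =>
            ((((N : ℝ) ^ ((1 : ℝ) - (p : ℝ)/2) : ℝ)) : ℂ)) Filter.atTop (nhds 0) := by
          have h6 := (Complex.continuous_ofReal.tendsto 0).comp h2
          rw [Complex.ofReal_zero] at h6
          exact h6
        simpa using h4.mul_const (tensorCum φ p α (fun _ => x 0 - m • 1))
      refine Filter.Tendsto.congr' ?_ h3
      filter_upwards [Filter.eventually_ge_atTop 1] with N hN
      exact (hpart1 N hN).symm
end
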